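/- arXiv:2010.01584 — 6 statements merged into one kernel-verified Lean document; each statement's English description precedes it below -/
import Mathlib

section
/- Let n ≥ 1 and ρ = (n, n−1, …, 2, 1) ∈ ℝⁿ. For every natural number m, ‖{(m, 0, …, 0) − ρ} + ρ‖² ≥ Σ_{j=1}^{n} (2j−1)², with equality if and only if m = n. (Here {v} denotes the weakly decreasing rearrangement of the vector of absolute values (|v_1|, …, |v_n|), and ‖·‖ is the Euclidean norm.) -/
/-- Type C spin norm computation for the oscillator representations.
Let `ρ = (n, n-1, …, 1)` and let `w = {(m, 0, …, 0) - ρ}` be the weakly decreasing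
rearrangement of absolute values. Then `‖w + ρ‖² ≥ Σ_{j=1}^{n} (2j-1)²`, with equality
if and only if `m = n`. -/
theorem stmt5 (n : ℕ) (hn : 1 ≤ n) (m : ℕ) (w : Fin n → ℝ)
    (hw : ∀ i j : Fin n, i ≤ j → w j ≤ w i)
    (hwperm : ∃ σ : Equiv.Perm (Fin n), ∀ i,
      w i = |(if ((σ i : ℕ)) = 0 then (m : ℝ) else 0) - ((n : ℝ) - ((σ i : ℕ) : ℝ))|) :
    (∑ j ∈ Finset.Icc 1 n, (2 * (j : ℝ) - 1) ^ 2)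
        ≤ ∑ i : Fin n, (w i + ((n : ℝ) - ((i : ℕ) : ℝ))) ^ 2 ∧
    ((∑ i : Fin n, (w i + ((n : ℝ) - ((i : ℕ) : ℝ))) ^ 2
        = ∑ j ∈ Finset.Icc 1 n, (2 * (j : ℝ) - 1) ^ 2) ↔ m = n) := by
  obtain ⟨σ, hσ⟩ := hwperm
  set base : Fin n → ℝ :=
    fun k => |(if ((k : ℕ)) = 0 then (m : ℝ) else 0) - ((n : ℝ) - ((k : ℕ) : ℝ))| with hbase
  have hw' : ∀ i, w i = base (σ i) := hσ
  have hwnonneg : ∀ i, 0 ≤ w i := fun i => (hw' i) ▸ abs_nonneg _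
  have hbase_pos : ∀ k : Fin n, 1 ≤ (k : ℕ) → base k = (n : ℝ) - (k : ℕ) := by
    intro k hk
    have hkn : (k : ℕ) < n := k.isLt
    simp only [hbase]
    rw [if_neg (by omega), abs_of_nonpos (by nlinarith [Nat.cast_lt (α := ℝ) |>.mpr hkn])]
    ring
  -- the key pointwise lower bound
  have key : ∀ i : Fin n, (n : ℝ) - 1 - (i : ℕ) ≤ w i := by
    intro i
    by_cases hi : (i : ℕ) + 2 ≤ n
    · set one : Fin n := ⟨1, by omega⟩ with hone
      set top : Fin n := ⟨(i : ℕ) + 1, by omega⟩ with htop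
      have hexists : ∃ k ∈ Finset.Icc one top, i ≤ σ.symm k := by
        by_contra hcon
        push_neg at hcon
        have hmap : ∀ k ∈ Finset.Icc one top, σ.symm k ∈ Finset.Iio i := by
          intro k hk
          exact Finset.mem_Iio.mpr (hcon k hk)
        have hcard := Finset.card_le_card_of_injOn _ hmap (σ.symm.injective.injOn)
        rw [Fin.card_Icc, Fin.card_Iio] at hcard
        simp only [hone, htop] at hcard
        omega
      obtain ⟨k, hk, hik⟩ := hexists
      rw [Finset.mem_Icc] at hk
      have hk1 : 1 ≤ (k : ℕ) := hk.1
      have hk2 : (k : ℕ) ≤ (i : ℕ) + 1 := hk.2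
      have hwj : w (σ.symm k) = (n : ℝ) - (k : ℕ) := by
        rw [hw', Equiv.apply_symm_apply, hbase_pos k hk1]
      have h1 : (n : ℝ) - 1 - (i : ℕ) ≤ (n : ℝ) - (k : ℕ) := by
        have : ((k : ℕ) : ℝ) ≤ ((i : ℕ) : ℝ) + 1 := by exact_mod_cast hk2
        linarith
      calc (n : ℝ) - 1 - (i : ℕ) ≤ w (σ.symm k) := by rw [hwj]; exact h1
        _ ≤ w i := hw i _ hik
    · have hin : (i : ℕ) < n := i.isLt
      have : (n : ℝ) - 1 - (i : ℕ) ≤ 0 := by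
        have : (n : ℝ) ≤ (i : ℕ) + 1 := by exact_mod_cast (by omega : n ≤ (i : ℕ) + 1)
        linarith
      linarith [hwnonneg i]
  -- termwise lower bound for the squares
  have hterm : ∀ i : Fin n,
      (2 * (n : ℝ) - 1 - 2 * ((i : ℕ) : ℝ)) ^ 2 ≤ (w i + ((n : ℝ) - (i : ℕ))) ^ 2 := by
    intro i
    have hin : ((i : ℕ) : ℝ) ≤ (n : ℝ) - 1 := by
      exact_mod_cast (by exact_mod_cast Nat.le_sub_one_of_lt i.isLt : ((i : ℕ) : ℤ) ≤ (n : ℤ) - 1)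
    have h0 : (0 : ℝ) ≤ 2 * (n : ℝ) - 1 - 2 * ((i : ℕ) : ℝ) := by linarith
    have h1 : 2 * (n : ℝ) - 1 - 2 * ((i : ℕ) : ℝ) ≤ w i + ((n : ℝ) - (i : ℕ)) := by
      linarith [key i]
    exact pow_le_pow_left₀ h0 h1 2
  -- rewrite the target sum
  have htarget : (∑ j ∈ Finset.Icc 1 n, (2 * (j : ℝ) - 1) ^ 2)
      = ∑ i : Fin n, (2 * (n : ℝ) - 1 - 2 * ((i : ℕ) : ℝ)) ^ 2 := by
    have h1 : Finset.Icc 1 n = Finset.Ico 1 (n + 1) := by rw [Finset.Ico_add_one_right_eq_Icc]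
    rw [h1, Finset.sum_Ico_eq_sum_range]
    simp only [Nat.add_sub_cancel]
    rw [Fin.sum_univ_eq_sum_range (fun i => (2 * (n : ℝ) - 1 - 2 * (i : ℝ)) ^ 2) n]
    rw [← Finset.sum_range_reflect]
    apply Finset.sum_congr rfl
    intro i hi
    rw [Finset.mem_range] at hi
    have h2 : ((n - 1 - i : ℕ) : ℝ) = (n : ℝ) - 1 - i := by
      push_cast [Nat.cast_sub (by omega : i ≤ n - 1), Nat.cast_sub (by omega : 1 ≤ n)]
      ring
    rw [Nat.cast_add, h2]
    push_cast
    ring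
  -- the sum of w
  have hz : (0 : ℕ) < n := hn
  have hsumw : ∑ i : Fin n, w i
      = |(m : ℝ) - n| + ∑ i : Fin n, ((n : ℝ) - 1 - (i : ℕ)) := by
    have h1 : ∑ i : Fin n, w i = ∑ k : Fin n, base k := by
      rw [show (fun i => w i) = base ∘ σ from funext hw']
      exact Fintype.sum_equiv σ _ _ (fun i => rfl)
    rw [h1]
    have h2 : ∀ k : Fin n, base k
        = (if k = (⟨0, hz⟩ : Fin n) then |(m : ℝ) - n| - (n : ℝ) else 0)
          + 1 + ((n : ℝ) - 1 - (k : ℕ)) := by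
      intro k
      by_cases hk : k = (⟨0, hz⟩ : Fin n)
      · subst hk
        show |(if (0:ℕ) = 0 then (m:ℝ) else 0) - ((n:ℝ) - ((0:ℕ):ℝ))| = _
        rw [if_pos rfl]
        norm_num
      · have hk1 : 1 ≤ (k : ℕ) := by
          rcases Nat.eq_zero_or_pos (k : ℕ) with h | h
          · exact absurd (Fin.ext h) hk
          · exact h
        rw [hbase_pos k hk1, if_neg hk]
        ring
    rw [Finset.sum_congr rfl (fun k _ => h2 k)]
    rw [Finset.sum_add_distrib, Finset.sum_add_distrib, Finset.sum_ite_eq' Finset.univ]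
    simp only [Finset.mem_univ, if_pos, Finset.sum_const, Finset.card_univ, Fintype.card_fin,
      nsmul_eq_mul, mul_one]
    ring
  constructor
  · rw [htarget]
    exact Finset.sum_le_sum (fun i _ => hterm i)
  constructor
  · -- equality implies m = n
    intro heq
    rw [htarget] at heq
    have hall := (Finset.sum_eq_sum_iff_of_le (fun i _ => hterm i)).mp heq.symm
    have hwi : ∀ i : Fin n, w i = (n : ℝ) - 1 - (i : ℕ) := by
      intro i
      have h := hall i (Finset.mem_univ i)
      have hin : ((i : ℕ) : ℝ) ≤ (n : ℝ) - 1 := by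
        exact_mod_cast (by exact_mod_cast Nat.le_sub_one_of_lt i.isLt : ((i : ℕ) : ℤ) ≤ (n : ℤ) - 1)
      nlinarith [key i]
    have hs : ∑ i : Fin n, w i = ∑ i : Fin n, ((n : ℝ) - 1 - (i : ℕ)) :=
      Finset.sum_congr rfl (fun i _ => hwi i)
    have habs : |(m : ℝ) - n| = 0 := by
      rw [hsumw] at hs; linarith
    have : (m : ℝ) = n := by
      have := abs_eq_zero.mp habs; linarith
    exact_mod_cast this
  · -- m = n implies equality
    intro hmn
    have habs : |(m : ℝ) - n| = 0 := by rw [hmn]; simp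
    have hs : ∑ i : Fin n, w i = ∑ i : Fin n, ((n : ℝ) - 1 - (i : ℕ)) := by
      rw [hsumw, habs]; ring
    have hwi := (Finset.sum_eq_sum_iff_of_le (fun i _ => (key i))).mp hs.symm
    rw [htarget]
    apply Finset.sum_congr rfl
    intro i _
    rw [← hwi i (Finset.mem_univ i)]
    ring
end

section
/- Let n ≥ 1 and ρ = (n, n−1, …, 2, 1) ∈ ℝⁿ. For every natural number m with m ≢ n (mod 2), ‖{(m, 0, …, 0) − ρ} + ρ‖² ≥ 4 + Σ_{j=2}^{n} (2j−1)², with equality if and only if m = n − 1 or m = n + 1. (Here {v} denotes the weakly decreasing rearrangement of the vector of absolute values (|v_1|, …, |v_n|), and ‖·‖ is the Euclidean norm.) -/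
private lemma sq_sum2 (N : ℕ) :
    6 * ∑ j ∈ Finset.range N, ((j:ℝ)+1)^2 = (N:ℝ)*((N:ℝ)+1)*(2*(N:ℝ)+1) := by
  induction N with
  | zero => simp
  | succ k ih =>
    rw [Finset.sum_range_succ, mul_add, ih]
    push_cast; ring

private lemma sq_sum1 (N : ℕ) :
    3 * ∑ j ∈ Finset.range N, (2*(j:ℝ)+1)^2 = (N:ℝ)*(2*(N:ℝ)-1)*(2*(N:ℝ)+1) := by
  induction N with
  | zero => simp
  | succ k ih =>
    rw [Finset.sum_range_succ, mul_add, ih]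
    push_cast; ring

private lemma icc_sum (n : ℕ) (hn : 1 ≤ n) :
    ∑ j ∈ Finset.Icc 2 n, (2*(j:ℝ)-1)^2 = ∑ j ∈ Finset.range n, (2*(j:ℝ)+1)^2 - 1 := by
  have h : Finset.Icc 2 n = Finset.Ico 2 (n+1) := by rw [Finset.Ico_add_one_right_eq_Icc]
  rw [h, Finset.sum_Ico_eq_sub _ (by omega)]
  rw [Finset.sum_range_succ' (fun j => (2*(j:ℝ)-1)^2) n]
  have h2 : ∑ j ∈ Finset.range n, (2*((j:ℝ)+1)-1)^2 = ∑ j ∈ Finset.range n, (2*(j:ℝ)+1)^2 := by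
    exact Finset.sum_congr rfl fun j _ => by push_cast; ring
  simp [Finset.sum_range_succ]
  push_cast at h2 ⊢
  linarith [h2]

/-- the sorted (weakly decreasing) rearrangement, as a function of the position `i`. -/
private def Uf (n a i : ℕ) : ℕ :=
  if i = 0 ∧ n ≤ a then a else max (n-1-i) (min a (n-i))

/-- the permutation sending the original index `k` to its sorted position. -/
private def pf (n a k : ℕ) : ℕ :=
  if k = 0 then n - a else if k ≤ n - a then k - 1 else k

private lemma pf_lt {n a : ℕ} (ha : 1 ≤ a) {k : ℕ} (hk : k < n) : pf n a k < n := by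
  unfold pf; split_ifs <;> omega

private lemma VU {n a : ℕ} (ha : 1 ≤ a) {k : ℕ} (hk : k < n) :
    (if k = 0 then a else n - k) = Uf n a (pf n a k) := by
  unfold pf Uf; split_ifs <;> omega

private lemma pf_inj {n a : ℕ} (ha : 1 ≤ a) {k l : ℕ} (hk : k < n) (hl : l < n)
    (h : pf n a k = pf n a l) : k = l := by
  unfold pf at h; split_ifs at h <;> omega

private lemma Uf_anti {n a : ℕ} {i j : ℕ} (hij : i ≤ j) : Uf n a j ≤ Uf n a i := by
  unfold Uf; split_ifs <;> omega

/-- Type C spin norm computation for the oscillator representation of parity opposite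
to `n`. Let `ρ = (n, n-1, …, 1)` and let `w = {(m, 0, …, 0) - ρ}` with `m ≢ n (mod 2)`.
Then `‖w + ρ‖² ≥ 4 + Σ_{j=2}^{n} (2j-1)²`, with equality iff `m = n - 1` or `m = n + 1`. -/
theorem stmt6 (n : ℕ) (hn : 1 ≤ n) (m : ℕ) (hm : m % 2 ≠ n % 2) (w : Fin n → ℝ)
    (hw : ∀ i j : Fin n, i ≤ j → w j ≤ w i)
    (hwperm : ∃ σ : Equiv.Perm (Fin n), ∀ i,
      w i = |(if ((σ i : ℕ)) = 0 then (m : ℝ) else 0) - ((n : ℝ) - ((σ i : ℕ) : ℝ))|) :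
    (4 + ∑ j ∈ Finset.Icc 2 n, (2 * (j : ℝ) - 1) ^ 2)
        ≤ ∑ i : Fin n, (w i + ((n : ℝ) - ((i : ℕ) : ℝ))) ^ 2 ∧
    ((∑ i : Fin n, (w i + ((n : ℝ) - ((i : ℕ) : ℝ))) ^ 2
        = 4 + ∑ j ∈ Finset.Icc 2 n, (2 * (j : ℝ) - 1) ^ 2) ↔ (m + 1 = n ∨ m = n + 1)) := by
  classical
  obtain ⟨σ, hσ⟩ := hwperm
  set a : ℕ := if m ≤ n then n - m else m - n with ha
  have ha1 : 1 ≤ a := by rw [ha]; split_ifs <;> omega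
  set ρ : Fin n → ℝ := fun i => (n:ℝ) - ((i:ℕ):ℝ) with hρ
  -- `w` takes natural number values given by `Uf ∘ pf ∘ σ`.
  have hv : ∀ i : Fin n, w i = ((Uf n a (pf n a (σ i)) : ℕ) : ℝ) := by
    intro i
    rw [hσ i, ← VU ha1 (σ i).isLt]
    rcases eq_or_ne ((σ i : ℕ)) 0 with h0 | h0
    · rw [if_pos h0, if_pos h0, h0]
      rw [ha]
      rcases le_or_gt m n with h | h
      · have hc : (m:ℝ) ≤ (n:ℝ) := Nat.cast_le.2 h
        rw [if_pos h, Nat.cast_sub h]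
        push_cast
        rw [abs_of_nonpos (by linarith)]
        ring
      · have hc : (n:ℝ) ≤ (m:ℝ) := Nat.cast_le.2 h.le
        rw [if_neg (by omega), Nat.cast_sub h.le]
        push_cast
        rw [abs_of_nonneg (by linarith)]
        ring
    · have hc : ((σ i : ℕ):ℝ) ≤ (n:ℝ) := Nat.cast_le.2 (σ i).isLt.le
      rw [if_neg h0, if_neg h0, Nat.cast_sub (σ i).isLt.le]
      rw [abs_of_nonpos (by linarith)]
      ring
  -- the sorted tuple `u` and the permutation `τ` with `w = u ∘ τ`
  set pF : Fin n → Fin n := fun k => ⟨pf n a k, pf_lt ha1 k.isLt⟩ with hpF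
  have hinj : Function.Injective pF := by
    intro k l h
    exact Fin.ext (pf_inj ha1 k.isLt l.isLt (congrArg Fin.val h))
  set τ : Equiv.Perm (Fin n) :=
    σ.trans (Equiv.ofBijective pF (Finite.injective_iff_bijective.mp hinj)) with hτ
  set u : Fin n → ℝ := fun i => ((Uf n a (i:ℕ) : ℕ) : ℝ) with hu
  have hwu : ∀ i, w i = u (τ i) := fun i => hv i
  have hu_anti : ∀ i j : Fin n, i ≤ j → u j ≤ u i := fun i j hij =>
    Nat.cast_le.2 (Uf_anti (Fin.le_def.mp hij))
  have hmono : ∀ f : Fin n → ℝ, (∀ i j : Fin n, i ≤ j → f j ≤ f i) → Monovary f ρ := by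
    intro f hf i j hij
    simp only [hρ] at hij
    have h2 : (j:ℕ) < (i:ℕ) := by
      by_contra hcon
      push_neg at hcon
      have : ((i:ℕ):ℝ) ≤ ((j:ℕ):ℝ) := Nat.cast_le.2 hcon
      linarith
    exact hf j i (Fin.le_def.mpr h2.le)
  -- rearrangement: the cross terms agree
  have hcross : ∑ i, w i * ρ i = ∑ i, u i * ρ i := by
    apply le_antisymm
    · have h1 : ∑ i, w i * ρ i = ∑ i, u (τ i) * ρ i :=
        Finset.sum_congr rfl fun i _ => by rw [hwu i]
      rw [h1]
      exact (hmono u hu_anti).sum_comp_perm_mul_le_sum_mul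
    · have h2 : ∑ i, u i * ρ i = ∑ i, w (τ.symm i) * ρ i :=
        Finset.sum_congr rfl fun i _ => by rw [hwu (τ.symm i), Equiv.apply_symm_apply]
      rw [h2]
      exact (hmono w hw).sum_comp_perm_mul_le_sum_mul
  have hsq : ∑ i, (w i)^2 = ∑ i, (u i)^2 := by
    have h1 : ∑ i, (w i)^2 = ∑ i, (u (τ i))^2 :=
      Finset.sum_congr rfl fun i _ => by rw [hwu i]
    rw [h1]
    exact Equiv.sum_comp τ (fun i => (u i)^2)
  have hS : ∑ i : Fin n, (w i + ρ i)^2 = ∑ i : Fin n, (u i + ρ i)^2 := by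
    have e : ∀ f : Fin n → ℝ, ∑ i : Fin n, (f i + ρ i)^2
        = ∑ i, (f i)^2 + 2*(∑ i, f i * ρ i) + ∑ i, (ρ i)^2 := by
      intro f
      rw [Finset.mul_sum, ← Finset.sum_add_distrib, ← Finset.sum_add_distrib]
      exact Finset.sum_congr rfl fun i _ => by ring
    rw [e w, e u, hcross, hsq]
  -- pass to a sum over `range n`
  have hS2 : ∑ i : Fin n, (u i + ρ i)^2
      = ∑ i ∈ Finset.range n, (((Uf n a i : ℕ):ℝ) + ((n:ℝ) - (i:ℝ)))^2 :=
    Fin.sum_univ_eq_sum_range (fun i => (((Uf n a i : ℕ):ℝ) + ((n:ℝ) - (i:ℝ)))^2) n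
  -- the summand in terms of `k = n - i`
  set H : ℕ → ℝ := fun k =>
    if n ≤ a ∧ k = n then ((a:ℝ)+(n:ℝ))^2
    else if a < k then (2*(k:ℝ)-1)^2
    else if k = a then (2*(a:ℝ))^2
    else (2*(k:ℝ))^2 with hH
  have R1 : ∀ i < n, (((Uf n a i : ℕ):ℝ) + ((n:ℝ) - (i:ℝ)))^2 = H (n - i) := by
    intro i hi
    have hcast : ((n - i : ℕ) : ℝ) = (n:ℝ) - (i:ℝ) := Nat.cast_sub hi.le
    simp only [hH]
    by_cases hc : i = 0 ∧ n ≤ a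
    · obtain ⟨h1, h2⟩ := hc
      subst h1
      have hU : Uf n a 0 = a := by unfold Uf; rw [if_pos ⟨rfl, h2⟩]
      rw [hU, Nat.sub_zero, if_pos (⟨h2, rfl⟩ : n ≤ a ∧ n = n)]
      push_cast
      ring
    · have hc2 : ¬ (n ≤ a ∧ n - i = n) := by omega
      rw [if_neg hc2]
      have hU : Uf n a i = max (n-1-i) (min a (n-i)) := by unfold Uf; rw [if_neg hc]
      rcases lt_trichotomy a (n - i) with h | h | h
      · have hU2 : Uf n a i = n-1-i := by rw [hU]; omega
        rw [if_pos h, hU2, Nat.cast_sub (by omega : i ≤ n - 1),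
          Nat.cast_sub (by omega : 1 ≤ n), hcast]
        push_cast
        ring
      · have hU2 : Uf n a i = a := by rw [hU]; omega
        have hna : (n:ℝ) - (i:ℝ) = (a:ℝ) := by rw [← hcast, ← h]
        rw [if_neg (by omega), if_pos h.symm, hU2, hna]
        ring
      · have hU2 : Uf n a i = n - i := by rw [hU]; omega
        rw [if_neg (by omega), if_neg (by omega), hU2, hcast]
        ring
  have hS3 : ∑ i ∈ Finset.range n, (((Uf n a i : ℕ):ℝ) + ((n:ℝ) - (i:ℝ)))^2
      = ∑ j ∈ Finset.range n, H (j+1) := by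
    rw [Finset.sum_congr rfl (fun i hi => R1 i (Finset.mem_range.mp hi))]
    rw [← Finset.sum_range_reflect (fun j => H (j+1)) n]
    exact Finset.sum_congr rfl fun i hi => by
      have hi' := Finset.mem_range.mp hi
      congr 1
      omega
  have hgoal : ∑ i : Fin n, (w i + ((n : ℝ) - ((i : ℕ) : ℝ))) ^ 2
      = ∑ j ∈ Finset.range n, H (j+1) := by
    rw [← hS3, ← hS2, ← hS]
  rw [hgoal, icc_sum n hn]
  set Y : ℕ → ℝ := fun N => ∑ j ∈ Finset.range N, (2*(j:ℝ)+1)^2 with hY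
  -- now the goal is entirely about the explicit sums
  rcases le_or_gt a n with hA | hB
  · -- case a ≤ n
    obtain ⟨b, hb⟩ : ∃ b, a = b + 1 := ⟨a - 1, by omega⟩
    have split1 : ∑ j ∈ Finset.range n, H (j+1)
        = ∑ j ∈ Finset.Ico 0 a, H (j+1) + ∑ j ∈ Finset.Ico a n, H (j+1) := by
      rw [Finset.range_eq_Ico, ← Finset.sum_Ico_consecutive (fun j => H (j+1)) (Nat.zero_le a) hA]
    have e2 : ∑ j ∈ Finset.Ico a n, H (j+1) = Y n - Y a := by
      have e2' : ∑ j ∈ Finset.Ico a n, H (j+1) = ∑ j ∈ Finset.Ico a n, (2*(j:ℝ)+1)^2 :=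
        Finset.sum_congr rfl fun j hj => by
          have hj' := Finset.mem_Ico.mp hj
          rw [hH]
          simp only [if_neg (by omega : ¬ (n ≤ a ∧ j + 1 = n)), if_pos (by omega : a < j + 1)]
          push_cast
          ring
      rw [e2', hY, Finset.sum_Ico_eq_sub _ hA]
    have e4 : ∑ j ∈ Finset.Ico 0 a, H (j+1)
        = 4*(∑ j ∈ Finset.range b, ((j:ℝ)+1)^2) + (2*(a:ℝ))^2 := by
      rw [← Finset.range_eq_Ico, hb, Finset.sum_range_succ]
      have eb : ∀ j ∈ Finset.range b, H (j+1) = 4*((j:ℝ)+1)^2 := fun j hj => by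
        have hjb := Finset.mem_range.mp hj
        rw [hH]
        simp only [if_neg (by omega : ¬ (n ≤ a ∧ j + 1 = n)),
          if_neg (by omega : ¬ a < j + 1), if_neg (by omega : ¬ j + 1 = a)]
        push_cast
        ring
      rw [Finset.sum_congr rfl eb, ← Finset.mul_sum]
      congr 1
      simp only [hH]
      by_cases hna : n ≤ a ∧ b + 1 = n
      · rw [if_pos hna]
        have hna2 : n = a := by omega
        rw [hna2, hb]
        push_cast
        ring
      · rw [if_neg hna, if_neg (by omega : ¬ a < b + 1), if_pos (by omega : b + 1 = a), hb]
    have hacast : (a:ℝ) = (b:ℝ) + 1 := by rw [hb]; push_cast; ring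
    have key : ∑ j ∈ Finset.range n, H (j+1)
        = (4 + (Y n - 1)) + (b:ℝ)*(2*(b:ℝ)+5) := by
      rw [split1, e2, e4]
      have h1 := sq_sum1 a
      have h2 := sq_sum2 b
      rw [hacast] at h1
      have hYa : Y a = ∑ j ∈ Finset.range a, (2*(j:ℝ)+1)^2 := by rw [hY]
      rw [hacast]
      linear_combination (2/3)*h2 - (1/3)*h1 - hYa
    constructor
    · rw [key]
      have hbn : (0:ℝ) ≤ (b:ℝ)*(2*(b:ℝ)+5) := by positivity
      linarith
    · constructor
      · intro h
        rw [key] at h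
        have hb0 : (b:ℝ)*(2*(b:ℝ)+5) = 0 := by linarith
        have hbn : (0:ℝ) ≤ (b:ℝ) := Nat.cast_nonneg b
        have hb0' : (b:ℝ) = 0 := by nlinarith
        have hb0'' : b = 0 := by exact_mod_cast hb0'
        have ha2 : a = 1 := by omega
        rw [ha] at ha2
        split_ifs at ha2 <;> omega
      · intro h
        have ha2 : a = 1 := by rw [ha]; split_ifs <;> omega
        have hb0 : b = 0 := by omega
        rw [key, hb0]
        push_cast
        ring
  · -- case n < a
    have hm2 : m = n + a := by
      have ha' := ha
      split_ifs at ha' <;> omega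
    obtain ⟨c, hc⟩ : ∃ c, n = c + 1 := ⟨n - 1, by omega⟩
    have e5 : ∑ j ∈ Finset.range n, H (j+1)
        = 4*(∑ j ∈ Finset.range c, ((j:ℝ)+1)^2) + ((a:ℝ)+(n:ℝ))^2 := by
      rw [hc, Finset.sum_range_succ]
      have eb : ∀ j ∈ Finset.range c, H (j+1) = 4*((j:ℝ)+1)^2 := fun j hj => by
        have hjb := Finset.mem_range.mp hj
        rw [hH]
        simp only [if_neg (by omega : ¬ (n ≤ a ∧ j + 1 = n)),
          if_neg (by omega : ¬ a < j + 1), if_neg (by omega : ¬ j + 1 = a)]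
        push_cast
        ring
      rw [Finset.sum_congr rfl eb, ← Finset.mul_sum]
      congr 1
      simp only [hH]
      rw [if_pos (⟨hB.le, hc.symm⟩ : n ≤ a ∧ c + 1 = n), hc]
    have hncast : (n:ℝ) = (c:ℝ) + 1 := by rw [hc]; push_cast; ring
    have keyB : ∑ j ∈ Finset.range n, H (j+1)
        = (4 + (Y n - 1)) + (((a:ℝ)+(n:ℝ))^2 - 3 - (n:ℝ)*(2*(n:ℝ)-1)) := by
      rw [e5]
      have h1 := sq_sum1 n
      have h2 := sq_sum2 c
      rw [hncast] at h1
      have hYn : Y n = ∑ j ∈ Finset.range n, (2*(j:ℝ)+1)^2 := by rw [hY]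
      rw [hncast]
      linear_combination (2/3)*h2 - (1/3)*h1 - hYn
    have hlt : 4 + (Y n - 1) < ∑ j ∈ Finset.range n, H (j+1) := by
      rw [keyB]
      have hacast : (n:ℝ) + 1 ≤ (a:ℝ) := by exact_mod_cast hB
      have hn1 : (1:ℝ) ≤ (n:ℝ) := by exact_mod_cast hn
      have h4 : (2*(n:ℝ)+1)^2 ≤ ((a:ℝ)+(n:ℝ))^2 :=
        pow_le_pow_left₀ (by positivity) (by linarith) 2
      nlinarith [h4, hn1]
    constructor
    · exact hlt.le
    · constructor
      · intro h
        exact absurd h.symm hlt.ne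
      · intro h
        omega
end

section
/- Let a, b be integers with 1 ≤ a < b, set n = a + b, and let ρ = (n−1, n−2, …, 1, 0) ∈ ℝⁿ. For integers α_1 ≥ α_2 ≥ … ≥ α_{2a} ≥ 0, let η(α) ∈ ℝⁿ be the vector whose i-th coordinate equals α_i for 1 ≤ i ≤ 2a and whose remaining b − a coordinates equal 0. Then ‖{η(α) − ρ} + ρ‖² ≥ Σ_{j=a+1}^{b−1} 4j² + Σ_{j=1}^{2a} j², with equality if and only if α_i = n − i for every i = 1, …, 2a. (Here {v} denotes the weakly decreasing rearrangement of the vector of absolute values (|v_1|, …, |v_n|), and ‖·‖ is the Euclidean norm.) -/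
/-!
Write `B k = |η(α)_k - ρ_k|`, so that `w` is the decreasing rearrangement of `B`. Since `ρ` is
decreasing too, the rearrangement inequality says that among all arrangements `B ∘ π`, the sorted
one `w` maximizes `Σ (B (π i) + ρ_i)²`. So it suffices to bound one arrangement from below: put the
`b - a` coordinates `k ≥ 2a` first (there `B k = ρ_k`, giving the terms `4j²`, `a ≤ j < b`), followed
by `B 0, …, B (2a-1)`, which meet `ρ_{b-a+k} = 2a-1-k ≥ 0`. The latter terms are at least
`(2a-1-k)²`, with equality iff `B k = 0`, i.e. `α_k = ρ_k`. Conversely, if `α = ρ` on the first `2a`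
coordinates, that arrangement is itself decreasing, so it is `w`.
-/

open Finset

lemma sum_comp_perm_add_sq {ι R : Type*} [Fintype ι] [CommRing R] (σ : Equiv.Perm ι)
    (f g : ι → R) :
    ∑ i, (f (σ i) + g i) ^ 2
      = ∑ i, (f i + g i) ^ 2 + 2 * (∑ i, f (σ i) * g i - ∑ i, f i * g i) := by
  have hsq : ∑ i, f (σ i) ^ 2 = ∑ i, f i ^ 2 := Equiv.sum_comp σ (fun i => f i ^ 2)
  simp only [add_sq, sum_add_distrib, mul_assoc, ← mul_sum, hsq]
  ring

section Rearrangement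

variable {ι R : Type*} [Fintype ι] [CommRing R] [LinearOrder R] [IsStrictOrderedRing R]
  {f g : ι → R}

theorem Monovary.sum_comp_perm_add_sq_le_sum_add_sq (hfg : Monovary f g) (σ : Equiv.Perm ι) :
    ∑ i, (f (σ i) + g i) ^ 2 ≤ ∑ i, (f i + g i) ^ 2 := by
  have := hfg.sum_comp_perm_mul_le_sum_mul (σ := σ)
  rw [sum_comp_perm_add_sq]
  linarith

theorem Monovary.sum_comp_perm_add_sq_eq_sum_add_sq_iff (hfg : Monovary f g)
    (σ : Equiv.Perm ι) :
    ∑ i, (f (σ i) + g i) ^ 2 = ∑ i, (f i + g i) ^ 2 ↔ Monovary (f ∘ σ) g := by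
  rw [← hfg.sum_comp_perm_mul_eq_sum_mul_iff, sum_comp_perm_add_sq]
  constructor <;> intro h <;> linarith

end Rearrangement

lemma Fin.sum_univ_add_mod {M : Type*} [AddCommMonoid M] {m n : ℕ} (hmn : m ≤ n)
    (F : ℕ → ℕ → M) :
    ∑ i : Fin n, F ((m + i) % n) i
      = ∑ k ∈ range (n - m), F (m + k) k + ∑ k ∈ range m, F k (n - m + k) := by
  rw [Fin.sum_univ_eq_sum_range (fun i => F ((m + i) % n) i), ← Nat.sub_add_cancel hmn,
    sum_range_add, Nat.sub_add_cancel hmn]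
  congr 1
  · refine sum_congr rfl fun k hk => ?_
    rw [Nat.mod_eq_of_lt (by have := mem_range.1 hk; omega)]
  · refine sum_congr rfl fun k hk => ?_
    rw [show m + (n - m + k) = k + n by omega, Nat.add_mod_right,
      Nat.mod_eq_of_lt (by have := mem_range.1 hk; omega)]

section SumSq

variable {ι R : Type*} [CommRing R] [LinearOrder R] [IsStrictOrderedRing R] {s : Finset ι}
  {x y : ι → R}

lemma sum_sq_le_sum_add_sq (hx : ∀ i ∈ s, 0 ≤ x i) (hy : ∀ i ∈ s, 0 ≤ y i) :
    ∑ i ∈ s, y i ^ 2 ≤ ∑ i ∈ s, (x i + y i) ^ 2 :=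
  sum_le_sum fun i hi => pow_le_pow_left₀ (hy i hi) (le_add_of_nonneg_left (hx i hi)) 2

lemma sum_add_sq_eq_sum_sq_iff (hx : ∀ i ∈ s, 0 ≤ x i) (hy : ∀ i ∈ s, 0 ≤ y i) :
    ∑ i ∈ s, (x i + y i) ^ 2 = ∑ i ∈ s, y i ^ 2 ↔ ∀ i ∈ s, x i = 0 := by
  rw [eq_comm, sum_eq_sum_iff_of_le fun i hi =>
    pow_le_pow_left₀ (hy i hi) (le_add_of_nonneg_left (hx i hi)) 2]
  refine forall₂_congr fun i hi => ⟨fun h => ?_, fun h => by rw [h, zero_add]⟩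
  nlinarith [hx i hi, hy i hi]

end SumSq

namespace SpinNormD

def rho (n k : ℕ) : ℝ := (n : ℝ) - 1 - k

/-- The coordinates of `|η(α) - ρ|`, indexed from `0`. -/
def absEtaSubRho (a b : ℕ) (α : Fin (2 * a) → ℤ) (k : ℕ) : ℝ :=
  |(if h : k < 2 * a then (α ⟨k, h⟩ : ℝ) else 0) - rho (a + b) k|

def rotatedSum (a b : ℕ) (α : Fin (2 * a) → ℤ) : ℝ :=
  ∑ i : Fin (a + b), (absEtaSubRho a b α ((2 * a + i) % (a + b)) + rho (a + b) i) ^ 2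

def minSpinNormSq (a b : ℕ) : ℝ :=
  (∑ j ∈ Icc (a + 1) (b - 1), 4 * (j : ℝ) ^ 2) + ∑ j ∈ Icc 1 (2 * a), (j : ℝ) ^ 2

lemma antitone_rho (n : ℕ) : Antitone fun i : Fin n => rho n i := fun i j hij => by
  have : ((i : ℕ) : ℝ) ≤ j := by exact_mod_cast hij
  simp only [rho]
  linarith

lemma rho_nonneg {n k : ℕ} (h : k < n) : 0 ≤ rho n k := by
  have : (k : ℝ) + 1 ≤ n := by exact_mod_cast h
  simp only [rho]
  linarith

variable {a b : ℕ} {α : Fin (2 * a) → ℤ}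

lemma rho_eq_natCast_sub {n k : ℕ} (h : k < n) : rho n k = ((n - 1 - k : ℕ) : ℝ) := by
  rw [rho, Nat.cast_sub (by omega), Nat.cast_sub (by omega), Nat.cast_one]

lemma absEtaSubRho_of_le {k : ℕ} (h₁ : 2 * a ≤ k) (h₂ : k < a + b) :
    absEtaSubRho a b α k = rho (a + b) k := by
  rw [absEtaSubRho, dif_neg (by omega), zero_sub, abs_neg, abs_of_nonneg (rho_nonneg h₂)]

lemma absEtaSubRho_eq_zero_iff {k : ℕ} (h : k < 2 * a) :
    absEtaSubRho a b α k = 0 ↔ (α ⟨k, h⟩ : ℝ) = rho (a + b) k := by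
  rw [absEtaSubRho, dif_pos h, abs_eq_zero, sub_eq_zero]

lemma rho_add_two_mul_add (k : ℕ) : rho (a + b) (2 * a + k) + rho (a + b) k = 2 * rho b k := by
  simp only [rho]
  push_cast
  ring

lemma rho_add_sub_add (hab : a ≤ b) (k : ℕ) : rho (a + b) (b - a + k) = rho (2 * a) k := by
  simp only [rho]
  push_cast [Nat.cast_sub hab]
  ring

lemma rotatedSum_eq (hab : a ≤ b) (α : Fin (2 * a) → ℤ) :
    rotatedSum a b α = ∑ j ∈ Ico a b, 4 * (j : ℝ) ^ 2
      + ∑ k ∈ range (2 * a), (absEtaSubRho a b α k + rho (2 * a) k) ^ 2 := by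
  rw [rotatedSum, Fin.sum_univ_add_mod (by omega)
    (fun k i => (absEtaSubRho a b α k + rho (a + b) i) ^ 2), show a + b - 2 * a = b - a by omega]
  congr 1
  · rw [sum_Ico_eq_sum_range, ← sum_range_reflect]
    refine sum_congr rfl fun k hk => ?_
    rw [mem_range] at hk
    rw [absEtaSubRho_of_le (by omega) (by omega), rho_add_two_mul_add,
      rho_eq_natCast_sub (by omega), show b - 1 - (b - a - 1 - k) = a + k by omega]
    ring
  · exact sum_congr rfl fun k _ => by rw [rho_add_sub_add hab]

lemma minSpinNormSq_eq (hab : a < b) :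
    minSpinNormSq a b
      = ∑ j ∈ Ico a b, 4 * (j : ℝ) ^ 2 + ∑ k ∈ range (2 * a), rho (2 * a) k ^ 2 := by
  have hIco : Ico a b = insert a (Icc (a + 1) (b - 1)) := by
    ext j; simp only [mem_Ico, mem_insert, mem_Icc]; omega
  have hrange : range (2 * a + 1) = insert 0 (Icc 1 (2 * a)) := by
    ext j; simp only [mem_range, mem_insert, mem_Icc]; omega
  have hrho : ∑ k ∈ range (2 * a), rho (2 * a) k ^ 2 = ∑ k ∈ range (2 * a), (k : ℝ) ^ 2 := by
    rw [← sum_range_reflect (fun k => (k : ℝ) ^ 2)]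
    exact sum_congr rfl fun k hk => by rw [rho_eq_natCast_sub (mem_range.1 hk)]
  have hIcc :
      ∑ j ∈ Icc 1 (2 * a), (j : ℝ) ^ 2 = ∑ k ∈ range (2 * a), (k : ℝ) ^ 2 + 4 * a ^ 2 := by
    have := sum_range_succ (fun k : ℕ => (k : ℝ) ^ 2) (2 * a)
    rw [hrange, sum_insert (by simp)] at this
    push_cast at this
    linarith
  rw [minSpinNormSq, hIco, sum_insert (by simp), hrho, hIcc]
  ring

lemma minSpinNormSq_le_rotatedSum (hab : a < b) (α : Fin (2 * a) → ℤ) :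
    minSpinNormSq a b ≤ rotatedSum a b α := by
  rw [minSpinNormSq_eq hab, rotatedSum_eq hab.le]
  exact add_le_add_right (sum_sq_le_sum_add_sq (x := absEtaSubRho a b α)
    (fun k _ => abs_nonneg _) (fun k hk => rho_nonneg (mem_range.1 hk))) _

lemma rotatedSum_eq_minSpinNormSq_iff (hab : a < b) (α : Fin (2 * a) → ℤ) :
    rotatedSum a b α = minSpinNormSq a b ↔ ∀ i, (α i : ℝ) = rho (a + b) i := by
  rw [minSpinNormSq_eq hab, rotatedSum_eq hab.le, add_right_inj,
    sum_add_sq_eq_sum_sq_iff (x := absEtaSubRho a b α) (fun k _ => abs_nonneg _)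
      (fun k hk => rho_nonneg (mem_range.1 hk))]
  refine ⟨fun h i => (absEtaSubRho_eq_zero_iff i.2).1 (h i (mem_range.2 i.2)),
    fun h k hk => (absEtaSubRho_eq_zero_iff (mem_range.1 hk)).2 (h _)⟩

lemma antitone_absEtaSubRho_rotate (hab : a ≤ b) (hα : ∀ i, (α i : ℝ) = rho (a + b) i) :
    Antitone fun i : Fin (a + b) => absEtaSubRho a b α ((2 * a + i) % (a + b)) := by
  have hhead : ∀ i : ℕ, i < b - a →
      absEtaSubRho a b α ((2 * a + i) % (a + b)) = rho (a + b) (2 * a + i) := fun i hi => by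
    rw [Nat.mod_eq_of_lt (by omega), absEtaSubRho_of_le (by omega) (by omega)]
  have htail : ∀ i : ℕ, b - a ≤ i → i < a + b →
      absEtaSubRho a b α ((2 * a + i) % (a + b)) = 0 := fun i hi₁ hi₂ => by
    have hlt : (2 * a + i) % (a + b) < 2 * a := by
      rw [show 2 * a + i = i - (b - a) + (a + b) by omega, Nat.add_mod_right,
        Nat.mod_eq_of_lt (by omega)]
      omega
    exact (absEtaSubRho_eq_zero_iff hlt).2 (hα _)
  intro i j hij
  have hij' : (i : ℕ) ≤ j := hij
  by_cases hj : (j : ℕ) < b - a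
  · dsimp only
    rw [hhead i (by omega), hhead j hj]
    exact antitone_rho (a + b) (show (⟨2 * a + i, by omega⟩ : Fin (a + b)) ≤ ⟨2 * a + j, by omega⟩
      from Fin.mk_le_mk.2 (by omega))
  · dsimp only
    rw [htail j (by omega) j.2]
    exact abs_nonneg _

end SpinNormD

open SpinNormD

theorem stmt8_general (a b : ℕ) (hab : a < b) (α : Fin (2 * a) → ℤ)
    (w : Fin (a + b) → ℝ)
    (hw : ∀ i j : Fin (a + b), i ≤ j → w j ≤ w i)
    (hwperm : ∃ σ : Equiv.Perm (Fin (a + b)), ∀ i,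
      w i = |(if h : ((σ i : ℕ)) < 2 * a then ((α ⟨(σ i : ℕ), h⟩ : ℤ) : ℝ) else 0)
              - (((a + b : ℕ) : ℝ) - 1 - ((σ i : ℕ) : ℝ))|) :
    ((∑ j ∈ Finset.Icc (a + 1) (b - 1), 4 * (j : ℝ) ^ 2)
        + ∑ j ∈ Finset.Icc 1 (2 * a), (j : ℝ) ^ 2)
        ≤ ∑ i : Fin (a + b), (w i + (((a + b : ℕ) : ℝ) - 1 - ((i : ℕ) : ℝ))) ^ 2 ∧
    ((∑ i : Fin (a + b), (w i + (((a + b : ℕ) : ℝ) - 1 - ((i : ℕ) : ℝ))) ^ 2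
        = (∑ j ∈ Finset.Icc (a + 1) (b - 1), 4 * (j : ℝ) ^ 2)
            + ∑ j ∈ Finset.Icc 1 (2 * a), (j : ℝ) ^ 2)
      ↔ ∀ i : Fin (2 * a), ((α i : ℤ) : ℝ) = ((a + b : ℕ) : ℝ) - 1 - ((i : ℕ) : ℝ)) := by
  obtain ⟨σ, hσ⟩ := hwperm
  have : NeZero (a + b) := ⟨by omega⟩
  let π := (Equiv.addLeft (⟨2 * a, by omega⟩ : Fin (a + b))).trans σ.symm
  have hwπ : ∀ i, w (π i) = absEtaSubRho a b α ((2 * a + i) % (a + b)) := fun i => by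
    simp [π, hσ, absEtaSubRho, rho, Fin.val_add]
  have hrot : rotatedSum a b α = ∑ i, (w (π i) + rho (a + b) i) ^ 2 := by
    simp only [rotatedSum, hwπ]
  have hmono : Monovary w fun i : Fin (a + b) => rho (a + b) i :=
    Antitone.monovary hw (antitone_rho _)
  have hle : rotatedSum a b α ≤ ∑ i, (w i + rho (a + b) i) ^ 2 :=
    hrot ▸ hmono.sum_comp_perm_add_sq_le_sum_add_sq π
  change minSpinNormSq a b ≤ _ ∧ (_ = minSpinNormSq a b ↔ ∀ i : Fin (2 * a), _ = rho (a + b) i)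
  refine ⟨(minSpinNormSq_le_rotatedSum hab α).trans hle, fun h => ?_, fun hα => ?_⟩
  · exact (rotatedSum_eq_minSpinNormSq_iff hab α).1
      (le_antisymm (h ▸ hle) (minSpinNormSq_le_rotatedSum hab α))
  · rw [← (rotatedSum_eq_minSpinNormSq_iff hab α).2 hα, hrot]
    refine ((hmono.sum_comp_perm_add_sq_eq_sum_add_sq_iff π).2 ?_).symm
    rw [show w ∘ π = _ from funext hwπ]
    exact (antitone_absEtaSubRho_rotate hab.le hα).monovary (antitone_rho _)

/-- Type D spin norm computation for the unipotent representations attached to the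
nilpotent orbit with columns `(2b, 2a-1, 1)`. Here `n = a + b` with `a < b`,
`ρ = (n-1, n-2, …, 1, 0)`, `η(α) = (α_1, …, α_{2a}, 0, …, 0)`, and `w = {η(α) - ρ}` is
the weakly decreasing rearrangement of absolute values. Then
`‖w + ρ‖² ≥ Σ_{j=a+1}^{b-1} 4j² + Σ_{j=1}^{2a} j²`, with equality iff `α_i = n - i`
for all `i = 1, …, 2a` (in 1-based indexing). -/
theorem stmt8 (a b : ℕ) (ha : 1 ≤ a) (hab : a < b) (α : Fin (2 * a) → ℤ)
    (hα : ∀ i j : Fin (2 * a), i ≤ j → α j ≤ α i) (hα0 : ∀ i, 0 ≤ α i)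
    (w : Fin (a + b) → ℝ)
    (hw : ∀ i j : Fin (a + b), i ≤ j → w j ≤ w i)
    (hwperm : ∃ σ : Equiv.Perm (Fin (a + b)), ∀ i,
      w i = |(if h : ((σ i : ℕ)) < 2 * a then ((α ⟨(σ i : ℕ), h⟩ : ℤ) : ℝ) else 0)
              - (((a + b : ℕ) : ℝ) - 1 - ((σ i : ℕ) : ℝ))|) :
    ((∑ j ∈ Finset.Icc (a + 1) (b - 1), 4 * (j : ℝ) ^ 2)
        + ∑ j ∈ Finset.Icc 1 (2 * a), (j : ℝ) ^ 2)
        ≤ ∑ i : Fin (a + b), (w i + (((a + b : ℕ) : ℝ) - 1 - ((i : ℕ) : ℝ))) ^ 2 ∧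
    ((∑ i : Fin (a + b), (w i + (((a + b : ℕ) : ℝ) - 1 - ((i : ℕ) : ℝ))) ^ 2
        = (∑ j ∈ Finset.Icc (a + 1) (b - 1), 4 * (j : ℝ) ^ 2)
            + ∑ j ∈ Finset.Icc 1 (2 * a), (j : ℝ) ^ 2)
      ↔ ∀ i : Fin (2 * a), ((α i : ℤ) : ℝ) = ((a + b : ℕ) : ℝ) - 1 - ((i : ℕ) : ℝ)) :=
  stmt8_general a b hab α w hw hwperm
end

section
/- Let n ≥ 1 and ρ = (n, n−1, …, 1) ∈ ℝⁿ. For m ∈ ℕ define δ(m) ∈ ℝⁿ by δ(m) = (n−1, n−2, …, 1, 0) if m ≡ n (mod 2), and by δ(m)_k = n − k for 1 ≤ k ≤ n−1 together with δ(m)_n = 1 if m ≢ n (mod 2). Then for every m ∈ ℕ there exist natural numbers c_1, …, c_n such that {(m, 0, …, 0) − ρ} − δ(m) = Σ_{i=1}^{n−1} c_i (e_i − e_{i+1}) + c_n · (2 e_n). (Here {v} denotes the weakly decreasing rearrangement of the vector of absolute values (|v_1|, …, |v_n|), and e_1, …, e_n is the standard basis of ℝⁿ.) -/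
/-- The simple roots of type `C_n`: for `i + 1 < n` the root `e_i - e_{i+1}`, and for the
last index the long root `2e_{n-1}` (0-based; this is `2e_n` in 1-based indexing). -/
noncomputable def simpleRootC (n : ℕ) (i : Fin n) : Fin n → ℝ :=
  if (i : ℕ) + 1 < n then
    fun k => (if k = i then 1 else 0) - (if (k : ℕ) = (i : ℕ) + 1 then 1 else 0)
  else
    fun k => if k = i then 2 else 0

/-- Type C positivity (claim (7.2) of Proposition 7.1): with `ρ = (n, n-1, …, 1)`,
`δ(m) = (n-1, n-2, …, 1, 0)` if `m ≡ n (mod 2)` and `δ(m) = (n-1, n-2, …, 2, 1, 1)`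
otherwise, and `w = {(m, 0, …, 0) - ρ}` the weakly decreasing rearrangement of absolute
values, the difference `w - δ(m)` is a nonnegative integer combination of the simple
roots `e_i - e_{i+1}` (`1 ≤ i ≤ n-1`) and `2e_n`. -/
theorem stmt10 (n : ℕ) (hn : 1 ≤ n) (m : ℕ) (w : Fin n → ℝ)
    (hw : ∀ i j : Fin n, i ≤ j → w j ≤ w i)
    (hwperm : ∃ σ : Equiv.Perm (Fin n), ∀ i,
      w i = |(if ((σ i : ℕ)) = 0 then (m : ℝ) else 0) - ((n : ℝ) - ((σ i : ℕ) : ℝ))|) :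
    ∃ c : Fin n → ℕ,
      w - (fun k : Fin n =>
          if m % 2 = n % 2 then (n : ℝ) - 1 - ((k : ℕ) : ℝ)
          else if (k : ℕ) + 1 = n then 1 else (n : ℝ) - 1 - ((k : ℕ) : ℝ))
        = ∑ i : Fin n, (c i : ℝ) • simpleRootC n i := by
  obtain ⟨σ, hσ⟩ := hwperm
  -- the absolute value at position 0
  set a : ℕ := ((m : ℤ) - (n : ℤ)).natAbs with ha
  have habs : ((a : ℕ) : ℝ) = |(m : ℝ) - (n : ℝ)| := by
    rw [ha, Nat.cast_natAbs]; push_cast; ring_nf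
  -- the multiset of absolute values, as naturals
  set NV : Fin n → ℕ := fun t => if (t : ℕ) = 0 then a else n - (t : ℕ) with hNV
  set N : Fin n → ℕ := fun i => NV (σ i) with hN
  have hwN : ∀ i, w i = (N i : ℝ) := by
    intro i
    rw [hσ i]
    simp only [hN, hNV]
    by_cases h : (σ i : ℕ) = 0
    · rw [if_pos h, if_pos h, h, habs]
      norm_num
    · rw [if_neg h, if_neg h, zero_sub, abs_neg,
        abs_of_nonneg (by
          have := (σ i).isLt
          have h1 : ((σ i : ℕ) : ℝ) ≤ (n : ℝ) := by exact_mod_cast this.le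
          linarith)]
      rw [Nat.cast_sub (σ i).isLt.le]
  -- δ as naturals
  set D : Fin n → ℕ := fun k =>
    if m % 2 = n % 2 then n - 1 - (k : ℕ)
    else if (k : ℕ) + 1 = n then 1 else n - 1 - (k : ℕ) with hD
  have hcast : ∀ k : Fin n, ((n - 1 - (k : ℕ) : ℕ) : ℝ) = (n : ℝ) - 1 - ((k : ℕ) : ℝ) := by
    intro k
    have hk := k.isLt
    rw [Nat.sub_sub, Nat.cast_sub (by omega)]
    push_cast; ring
  have hDcast : ∀ k : Fin n,
      (if m % 2 = n % 2 then (n : ℝ) - 1 - ((k : ℕ) : ℝ)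
        else if (k : ℕ) + 1 = n then 1 else (n : ℝ) - 1 - ((k : ℕ) : ℝ)) = (D k : ℝ) := by
    intro k
    simp only [hD]
    split_ifs
    · rw [hcast k]
    · norm_num
    · rw [hcast k]
  -- sortedness gives the componentwise lower bound
  have hsort : ∀ k : Fin n, (k : ℕ) + 1 < n → (n : ℝ) - 1 - ((k : ℕ) : ℝ) ≤ w k := by
    intro k hk
    set s : Finset (Fin n) := Finset.image σ (Finset.Iio k) with hs
    set t : Finset (Fin n) := Finset.Icc ⟨1, by omega⟩ ⟨(k : ℕ) + 1, hk⟩ with ht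
    have hcard : s.card < t.card := by
      have h1 : s.card ≤ (k : ℕ) := by
        calc s.card ≤ (Finset.Iio k).card := Finset.card_image_le
        _ = (k : ℕ) := Fin.card_Iio k
      have h2 : t.card = (k : ℕ) + 1 := by
        rw [ht, Fin.card_Icc]; simp
      omega
    have hex : ∃ x ∈ t, x ∉ s := by
      by_contra hcon
      push_neg at hcon
      exact absurd (Finset.card_le_card fun x hx => hcon x hx) (by omega)
    obtain ⟨x, hxt, hxs⟩ := hex
    rw [ht, Finset.mem_Icc] at hxt
    have hx1 : 1 ≤ (x : ℕ) := hxt.1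
    have hx2 : (x : ℕ) ≤ (k : ℕ) + 1 := hxt.2
    set j := σ.symm x with hj
    have hjk : k ≤ j := by
      by_contra hcon
      push_neg at hcon
      exact hxs (Finset.mem_image.2 ⟨j, Finset.mem_Iio.2 hcon, by simp [hj]⟩)
    have hwj : w j = (n : ℝ) - ((x : ℕ) : ℝ) := by
      rw [hσ j]
      have hx0 : (σ j : ℕ) = (x : ℕ) := by rw [hj]; simp
      rw [hx0, if_neg (by omega), zero_sub, abs_neg,
        abs_of_nonneg (by
          have := x.isLt
          have h1 : ((x : ℕ) : ℝ) ≤ (n : ℝ) := by exact_mod_cast this.le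
          linarith)]
    have h3 := hw k j hjk
    have h4 : ((x : ℕ) : ℝ) ≤ ((k : ℕ) : ℝ) + 1 := by exact_mod_cast hx2
    rw [hwj] at h3
    linarith
  have hpos : ¬ (m % 2 = n % 2) → ∀ k : Fin n, (1 : ℝ) ≤ w k := by
    intro hodd k
    rw [hwN k]
    have h1 : 1 ≤ N k := by
      simp only [hN, hNV]
      by_cases h : (σ k : ℕ) = 0
      · rw [if_pos h]
        have : m ≠ n := by omega
        omega
      · rw [if_neg h]
        have := (σ k).isLt
        omega
    exact_mod_cast h1
  -- componentwise N ≥ D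
  have hND : ∀ k : Fin n, D k ≤ N k := by
    intro k
    by_cases hk : (k : ℕ) + 1 < n
    · have h := hsort k hk
      rw [hwN k, ← hcast k] at h
      have h3 : n - 1 - (k : ℕ) ≤ N k := by exact_mod_cast h
      simp only [hD]
      split_ifs with h4 h5
      · exact h3
      · omega
      · exact h3
    · have hk' : (k : ℕ) + 1 = n := by have := k.isLt; omega
      simp only [hD]
      split_ifs with h4
      · have : n - 1 - (k : ℕ) = 0 := by omega
        rw [this]; exact Nat.zero_le _
      · have h := hpos h4 k
        rw [hwN k] at h
        exact_mod_cast h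
  -- partial sums
  set f : ℕ → ℕ := fun i => if h : i < n then N ⟨i, h⟩ - D ⟨i, h⟩ else 0 with hf
  set P : ℕ → ℕ := fun k => ∑ i ∈ Finset.range k, f i with hP
  have hfk : ∀ k : Fin n, ((f (k : ℕ) : ℕ) : ℝ) = (N k : ℝ) - (D k : ℝ) := by
    intro k
    simp only [hf]
    rw [dif_pos k.isLt, Nat.cast_sub (by simpa [Fin.eta] using hND k)]
  -- parity of the total sum
  obtain ⟨n', rfl⟩ : ∃ n', n = n' + 1 := ⟨n - 1, by omega⟩
  have hPn : (P (n' + 1) : ℤ) = ∑ i : Fin (n' + 1), ((N i : ℤ) - (D i : ℤ)) := by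
    have h1 : P (n' + 1) = ∑ i : Fin (n' + 1), (N i - D i) := by
      simp only [hP]
      rw [← Fin.sum_univ_eq_sum_range]
      refine Finset.sum_congr rfl fun i _ => ?_
      simp only [hf]
      rw [dif_pos i.isLt]
    rw [h1, Nat.cast_sum]
    exact Finset.sum_congr rfl fun i _ => Nat.cast_sub (hND i)
  have hsplitN : ∑ i : Fin (n' + 1), (N i : ℤ) = ∑ t : Fin (n' + 1), (NV t : ℤ) :=
    Equiv.sum_comp σ fun t => (NV t : ℤ)
  have hterm : ∀ i : Fin n', NV (Fin.succ i) = D (Fin.castSucc i) := by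
    intro i
    simp only [hNV, hD, Fin.val_succ, Fin.coe_castSucc]
    have hi := i.isLt
    split_ifs <;> first | contradiction | omega
  have hE : (P (n' + 1) : ℤ) = (a : ℤ) - (D (Fin.last n') : ℤ) := by
    rw [hPn, Finset.sum_sub_distrib, hsplitN, Fin.sum_univ_succ (fun t => ((NV t : ℤ))),
      Fin.sum_univ_castSucc (fun k => ((D k : ℤ)))]
    have h0 : NV 0 = a := by simp [hNV]
    have h1 : ∑ i : Fin n', (NV (Fin.succ i) : ℤ) = ∑ i : Fin n', (D (Fin.castSucc i) : ℤ) :=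
      Finset.sum_congr rfl fun i _ => by rw [hterm i]
    rw [h0, h1]
    ring
  have hdlast : D (Fin.last n') = if m % 2 = (n' + 1) % 2 then 0 else 1 := by
    simp only [hD, Fin.val_last]
    split_ifs with h1
    · omega
    · rfl
  have hpar : 2 ∣ P (n' + 1) := by
    by_cases hmn : m % 2 = (n' + 1) % 2
    · rw [if_pos hmn] at hdlast
      rw [hdlast] at hE
      omega
    · rw [if_neg hmn] at hdlast
      rw [hdlast] at hE
      omega
  -- the coefficients
  refine ⟨fun k => if (k : ℕ) + 1 < n' + 1 then P ((k : ℕ) + 1) else P (n' + 1) / 2, ?_⟩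
  funext k
  simp only [Pi.sub_apply, Finset.sum_apply, Pi.smul_apply, smul_eq_mul]
  set c : Fin (n' + 1) → ℕ :=
    fun k => if (k : ℕ) + 1 < n' + 1 then P ((k : ℕ) + 1) else P (n' + 1) / 2 with hc
  have h1 : ∀ i : Fin (n' + 1), (c i : ℝ) * simpleRootC (n' + 1) i k =
      (if i = k then (if (k : ℕ) + 1 < n' + 1 then (c k : ℝ) else 2 * (c k : ℝ)) else 0) +
      (if (i : ℕ) + 1 = (k : ℕ) then -(c i : ℝ) else 0) := by
    intro i
    by_cases hik : i = k
    · subst hik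
      rw [if_pos rfl, if_neg (show ¬((i : ℕ) + 1 = (i : ℕ)) by omega), add_zero]
      simp only [simpleRootC]
      by_cases h : (i : ℕ) + 1 < n' + 1
      · rw [if_pos h, if_pos h]
        simp [show ¬ ((i : ℕ) = (i : ℕ) + 1) by omega]
      · rw [if_neg h, if_neg h]
        simp [mul_comm]
    · rw [if_neg hik]
      by_cases hik1 : (i : ℕ) + 1 = (k : ℕ)
      · rw [if_pos hik1]
        simp only [simpleRootC]
        rw [if_pos (by have := k.isLt; omega)]
        rw [if_neg (show ¬ k = i from fun h => hik h.symm), if_pos hik1.symm]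
        ring
      · rw [if_neg hik1]
        simp only [simpleRootC]
        by_cases h : (i : ℕ) + 1 < n' + 1
        · rw [if_pos h, if_neg (show ¬ k = i from fun hc => hik hc.symm),
            if_neg (show ¬ (k : ℕ) = (i : ℕ) + 1 from fun hc => hik1 hc.symm)]
          ring
        · rw [if_neg h, if_neg (show ¬ k = i from fun hc => hik hc.symm)]
          ring
  rw [Finset.sum_congr rfl fun i _ => h1 i, Finset.sum_add_distrib,
    Finset.sum_ite_eq' Finset.univ k, if_pos (Finset.mem_univ k)]
  -- now handle LHS δ and the remaining sum
  rw [hwN k]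
  rw [hDcast k]
  have hPsucc : ∀ j : ℕ, ((P (j + 1) : ℕ) : ℝ) = ((P j : ℕ) : ℝ) + ((f j : ℕ) : ℝ) := by
    intro j
    have : P (j + 1) = P j + f j := Finset.sum_range_succ f j
    exact_mod_cast congrArg (fun x : ℕ => ((x : ℕ) : ℝ)) this
  have hP0 : ((P 0 : ℕ) : ℝ) = 0 := by simp [hP]
  have hhalf : ((P (n' + 1) / 2 : ℕ) : ℝ) * 2 = ((P (n' + 1) : ℕ) : ℝ) := by
    exact_mod_cast congrArg (fun x : ℕ => ((x : ℕ) : ℝ)) (Nat.div_mul_cancel hpar)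
  by_cases hk0 : (k : ℕ) = 0
  · have hzero : (∑ i : Fin (n' + 1), if (i : ℕ) + 1 = (k : ℕ) then -(c i : ℝ) else 0) = 0 :=
      Finset.sum_eq_zero fun i _ => if_neg (by omega)
    rw [hzero, add_zero]
    by_cases hk1 : (k : ℕ) + 1 < n' + 1
    · rw [if_pos hk1]
      simp only [hc]
      rw [if_pos hk1, hk0]
      rw [hPsucc 0, hP0]
      have hh := hfk k
      rw [hk0] at hh
      rw [hh]
      ring
    · rw [if_neg hk1]
      simp only [hc]
      rw [if_neg hk1]
      have hPn1 : ((P (n' + 1) : ℕ) : ℝ) = (N k : ℝ) - (D k : ℝ) := by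
        rw [show n' + 1 = 0 + 1 from by omega, hPsucc 0, hP0]
        have hh := hfk k
        rw [hk0] at hh
        rw [hh]; ring
      rw [hPn1] at hhalf
      linarith [hhalf]
  · have hkl : (k : ℕ) - 1 < n' + 1 := by have := k.isLt; omega
    set kp : Fin (n' + 1) := ⟨(k : ℕ) - 1, hkl⟩ with hkp
    have hkpv : (kp : ℕ) = (k : ℕ) - 1 := rfl
    have hsum2 : (∑ i : Fin (n' + 1), if (i : ℕ) + 1 = (k : ℕ) then -(c i : ℝ) else 0)
        = -(c kp : ℝ) := by
      have hcong : ∀ i : Fin (n' + 1), (if (i : ℕ) + 1 = (k : ℕ) then -(c i : ℝ) else 0)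
          = (if i = kp then -(c i : ℝ) else 0) := by
        intro i
        by_cases h : i = kp
        · subst h
          rw [if_pos rfl, if_pos (by rw [hkpv]; omega)]
        · rw [if_neg h, if_neg (fun hcon => h (Fin.ext (by rw [hkpv]; omega)))]
      rw [Finset.sum_congr rfl fun i _ => hcong i, Finset.sum_ite_eq' Finset.univ kp,
        if_pos (Finset.mem_univ kp)]
    rw [hsum2]
    have hckp : (c kp : ℝ) = ((P ((k : ℕ)) : ℕ) : ℝ) := by
      simp only [hc]
      rw [if_pos (show (kp : ℕ) + 1 < n' + 1 by rw [hkpv]; have := k.isLt; omega)]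
      rw [show (kp : ℕ) + 1 = (k : ℕ) by rw [hkpv]; omega]
    have hPk : ((P ((k : ℕ) + 1) : ℕ) : ℝ) = ((P (k : ℕ) : ℕ) : ℝ) + ((N k : ℝ) - (D k : ℝ)) := by
      rw [hPsucc (k : ℕ), hfk k]
    by_cases hk1 : (k : ℕ) + 1 < n' + 1
    · rw [if_pos hk1]
      simp only [hc]
      rw [if_pos hk1, hckp, hPk]
      ring
    · rw [if_neg hk1]
      simp only [hc]
      rw [if_neg hk1]
      have hkn : (k : ℕ) + 1 = n' + 1 := by have := k.isLt; omega
      have hPnk : ((P (n' + 1) : ℕ) : ℝ) = ((P (k : ℕ) : ℕ) : ℝ) + ((N k : ℝ) - (D k : ℝ)) := by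
        have h5 := hPk
        rw [hkn] at h5
        exact h5
      rw [hckp]
      linarith [hhalf, hPnk]
end

section
/- Let a, b be integers with 1 ≤ a < b, set n = a + b, and let ρ = (n−1, n−2, …, 1, 0) ∈ ℝⁿ. For integers α_1 ≥ … ≥ α_{2a} ≥ 0, let η(α) ∈ ℝⁿ have i-th coordinate α_i for 1 ≤ i ≤ 2a and remaining coordinates 0, and define δ(α) ∈ ℝⁿ as the weakly decreasing vector whose multiset of coordinates is {n−2a−1, n−2a−2, …, 1, 0} together with 0 repeated 2a times if Σ_{i} α_i ≡ a (mod 2), and {n−2a−1, …, 1, 0} together with one 1 and 0 repeated 2a−1 times if Σ_{i} α_i ≢ a (mod 2). Then there exist natural numbers c_1, …, c_n such that {η(α) − ρ} − δ(α) = Σ_{i=1}^{n−1} c_i (e_i − e_{i+1}) + c_n (e_{n−1} + e_n). (Here {v} denotes the weakly decreasing rearrangement of the vector of absolute values (|v_1|, …, |v_n|), and e_1, …, e_n is the standard basis of ℝⁿ.) -/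
/-!
Write `G = η - ρ ∈ ℤⁿ`, `W = {G}` and `D = δ(α)`. A vector of `ℕⁿ` whose last entry is `0` and
whose entries have even sum is a nonnegative integer combination of the simple roots of `D_n`:
the coefficients are the partial sums, the full sum being split evenly between the last two
roots `e_{n-1} - e_n` and `e_{n-1} + e_n`. So it suffices to check these three properties for
`W - D`.

Coordinatewise `D ≤ W`: the entries `|G_j| = n - 1 - j` for `j ≥ 2a` already put `k + 1` values
`≥ n - 2a - 1 - k` into `W`. In the odd case moreover `η ≠ ρ` on the first `2a` coordinates,
since otherwise `∑ α_i = ∑_{j<2a} (n - 1 - j) ≡ a (mod 2)`; this gives the extra entry `≥ 1`.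
Both last entries vanish. Finally, modulo `2`, `∑ W ≡ ∑ G = ∑ α_i - ∑ ρ`, and if `δ⁰` denotes
the even-case `δ` then `∑ ρ - ∑ δ⁰ = ∑_{j<2a} (n - 1 - j) ≡ a`; this is exactly the parity
correction built into `δ`.
-/

/-- The simple roots of type `D_n`: for `i + 1 < n` the root `e_i - e_{i+1}`, and for the
last index the root `e_{n-2} + e_{n-1}` (0-based; this is `e_{n-1} + e_n` in 1-based
indexing). -/
noncomputable def simpleRootD (n : ℕ) (i : Fin n) : Fin n → ℝ :=
  if (i : ℕ) + 1 < n then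
    fun k => (if k = i then 1 else 0) - (if (k : ℕ) = (i : ℕ) + 1 then 1 else 0)
  else
    fun k => (if (k : ℕ) + 2 = n then 1 else 0) + (if (k : ℕ) + 1 = n then 1 else 0)

open Finset

theorem sum_smul_simpleRootD_apply {m : ℕ} (c : ℕ → ℝ) (k : Fin (m + 1)) :
    (∑ i : Fin (m + 1), c i • simpleRootD (m + 1) i) k =
      (if (k : ℕ) < m then c k else 0) - (if (k : ℕ) = 0 then 0 else c (k - 1))
        + (if m ≤ (k : ℕ) + 1 then c m else 0) := by
  rw [Finset.sum_apply, Fin.sum_univ_castSucc]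
  simp only [Pi.smul_apply, smul_eq_mul, simpleRootD, Fin.val_castSucc, Fin.val_last, Fin.is_lt,
    add_lt_add_iff_right, lt_self_iff_false, if_true, if_false, Fin.ext_iff]
  rw [Fin.sum_univ_eq_sum_range
    (fun i => c i * ((if (k : ℕ) = i then 1 else 0) - if (k : ℕ) = i + 1 then 1 else 0)) m]
  simp only [mul_sub, mul_ite, mul_one, mul_zero, sum_sub_distrib, sum_ite_eq, mem_range]
  obtain ⟨_ | j, hj⟩ := k
  · simp only [zero_add, (Nat.succ_ne_zero _).symm, if_false, sum_const_zero, if_true]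
    split_ifs <;> first | omega | ring
  · simp only [Nat.add_right_cancel_iff, sum_ite_eq, mem_range, Nat.add_sub_cancel,
      Nat.add_one_ne_zero, if_false]
    split_ifs <;> first | omega | ring

theorem exists_nat_smul_simpleRootD_eq {n : ℕ} (v : Fin n → ℕ)
    (hlast : ∀ k : Fin n, (k : ℕ) + 1 = n → v k = 0) (heven : Even (∑ k, v k)) :
    ∃ c : Fin n → ℕ, (fun k => (v k : ℝ)) = ∑ i, (c i : ℝ) • simpleRootD n i := by
  cases n with
  | zero => exact ⟨0, funext fun k => k.elim0⟩
  | succ m =>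
  let S : ℕ → ℕ := fun j => ∑ i ∈ range j, if h : i < m + 1 then v ⟨i, h⟩ else 0
  have hS_succ (k : Fin (m + 1)) : S (k + 1) = S k + v k := by
    simp only [S, sum_range_succ, dif_pos k.isLt]
  have hS_top : S (m + 1) = ∑ k, v k := by
    simp only [S]
    rw [← Fin.sum_univ_eq_sum_range]
    simp only [Fin.is_lt, dif_pos, Fin.eta]
  obtain ⟨E, hE⟩ := heven
  -- `c_i = v_0 + ⋯ + v_i`, except that the last two roots each get half of `v_0 + ⋯ + v_{n-1}`
  refine ⟨fun i => if (i : ℕ) + 1 < m then S (i + 1) else E, funext fun k => ?_⟩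
  rw [sum_smul_simpleRootD_apply (fun i => ((if i + 1 < m then S (i + 1) else E : ℕ) : ℝ))]
  have hS_zero : (S 0 : ℝ) = 0 := by simp [S]
  have hS_k : (S (k + 1) : ℝ) = S k + v k := by exact_mod_cast hS_succ k
  have hS_m : (S (m + 1) : ℝ) = S m := by
    exact_mod_cast (hS_succ (Fin.last m)).trans (by simp [hlast (Fin.last m) rfl])
  have hS_E : (S (m + 1) : ℝ) = E + E := by exact_mod_cast hS_top.trans hE
  have hv_last : (k : ℕ) = m → (v k : ℝ) = 0 := fun h => by simp [hlast k (by omega)]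
  clear_value S
  obtain ⟨j, hj⟩ := k
  simp only at hS_k hv_last ⊢
  obtain hjm | rfl | rfl : j + 1 < m ∨ m = j + 1 ∨ j = m := by omega
  all_goals
    rcases j with _ | j <;>
    simp only [Nat.add_sub_cancel, Nat.add_one_ne_zero, ↓reduceIte, Fin.zero_eta, true_implies]
      at hS_k hv_last ⊢ <;>
    split_ifs <;> first | omega | (push_cast; linarith)

theorem Antitone.le_comp_of_lt_card {β : Type*} [LinearOrder β] {n : ℕ} {x : Fin n → β}
    {σ : Equiv.Perm (Fin n)} (hx : Antitone (x ∘ σ)) {s : Finset (Fin n)} {t : β}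
    (hs : ∀ j ∈ s, t ≤ x j) {k : Fin n} (hk : (k : ℕ) < #s) : t ≤ x (σ k) := by
  by_contra! hlt
  have hsub : s.map σ.symm.toEmbedding ⊆ Iio k := by
    intro i hi
    obtain ⟨j, hj, rfl⟩ := mem_map.1 hi
    by_contra hki
    have := hx (not_lt.1 (mem_Iio.not.1 hki))
    simp only [Function.comp_apply, Equiv.toEmbedding_apply, Equiv.apply_symm_apply] at this
    exact hlt.not_ge ((hs j hj).trans this)
  have hcard := card_le_card hsub
  simp only [card_map, Fin.card_Iio] at hcard
  omega

theorem sum_range_two_mul_sub_modEq (N : ℤ) (a : ℕ) :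
    ∑ i ∈ range (2 * a), (N - i) ≡ a [ZMOD 2] := by
  induction a with
  | zero => rfl
  | succ a ih =>
    rw [Nat.mul_succ, sum_range_succ, sum_range_succ]
    unfold Int.ModEq at *
    push_cast
    omega

theorem sum_range_sub_sum_range_max (p m : ℕ) :
    ∑ j ∈ range (p + m), ((p + m : ℕ) - 1 - j : ℤ) - ∑ k ∈ range (m + p), max ((m : ℤ) - 1 - k) 0
      = ∑ i ∈ range p, ((p + m : ℕ) - 1 - i : ℤ) := by
  rw [sum_range_add, sum_range_add, sum_congr rfl fun x (_ : x ∈ range p) =>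
    (max_eq_right (by omega) : max ((m : ℤ) - 1 - (m + x : ℕ)) 0 = 0),
    sum_congr rfl fun x (hx : x ∈ range m) =>
    (max_eq_left (by simp at hx; omega) : max ((m : ℤ) - 1 - x) 0 = m - 1 - x)]
  push_cast
  simp only [sum_const_zero, add_zero]
  rw [add_sub_assoc, add_eq_left, ← sum_sub_distrib]
  exact sum_eq_zero fun x _ => by ring

namespace TypeDPositivity

def rho (n : ℕ) (j : Fin n) : ℤ := (n : ℤ) - 1 - j

def eta (a b : ℕ) (α : Fin (2 * a) → ℤ) (j : Fin (a + b)) : ℤ :=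
  if h : (j : ℕ) < 2 * a then α ⟨j, h⟩ else 0

/-- `δ(α)`, which depends on `α` only through the parity of `s = ∑ α_i`. -/
def delta (a b : ℕ) (s : ℤ) (k : Fin (a + b)) : ℤ :=
  if s % 2 = a % 2 then max (((a + b : ℕ) : ℤ) - 2 * a - 1 - k) 0
  else if (k : ℕ) + a + 1 = b then 1 else max (((a + b : ℕ) : ℤ) - 2 * a - 1 - k) 0

variable {a b : ℕ} {α : Fin (2 * a) → ℤ}

theorem abs_eta_sub_rho_of_le {j : Fin (a + b)} (hj : 2 * a ≤ j) :
    |eta a b α j - rho (a + b) j| = ((a + b : ℕ) : ℤ) - 1 - j := by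
  have := j.isLt
  rw [eta, dif_neg (not_lt.2 hj), rho, zero_sub, abs_neg, abs_of_nonneg (by omega)]

theorem sum_eta (hab : a ≤ b) : ∑ j, eta a b α j = ∑ i, α i := by
  unfold eta
  rw [Fin.sum_univ_eq_sum_range (fun j => if h : j < 2 * a then α ⟨j, h⟩ else 0),
    show a + b = 2 * a + (b - a) by omega, sum_range_add,
    sum_eq_zero (s := range (b - a)) fun x _ => dif_neg (by omega), add_zero,
    ← Fin.sum_univ_eq_sum_range (fun j => if h : j < 2 * a then α ⟨j, h⟩ else 0)]
  exact sum_congr rfl fun i _ => dif_pos i.isLt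

theorem sum_rho_sub_sum_max (hab : a ≤ b) :
    ∑ j, rho (a + b) j - ∑ k : Fin (a + b), max (((a + b : ℕ) : ℤ) - 2 * a - 1 - k) 0
      = ∑ i ∈ range (2 * a), (((a + b : ℕ) : ℤ) - 1 - i) := by
  obtain ⟨m, rfl⟩ := Nat.exists_eq_add_of_le hab
  unfold rho
  rw [Fin.sum_univ_eq_sum_range (fun j => (((a + (a + m) : ℕ) : ℤ) - 1 - j)),
    Fin.sum_univ_eq_sum_range (fun k => max (((a + (a + m) : ℕ) : ℤ) - 2 * a - 1 - k) 0)]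
  convert sum_range_sub_sum_range_max (2 * a) m using 3 <;> push_cast <;> ring_nf

theorem sum_delta (hab : a < b) (s : ℤ) :
    ∑ k, delta a b s k
      = ∑ k : Fin (a + b), max (((a + b : ℕ) : ℤ) - 2 * a - 1 - k) 0
        + if s % 2 = a % 2 then 0 else 1 := by
  unfold delta
  by_cases hs : s % 2 = a % 2
  · simp only [hs, if_true, add_zero]
  simp only [hs, if_false]
  have hk (k : Fin (a + b)) :
      (if (k : ℕ) + a + 1 = b then 1 else max (((a + b : ℕ) : ℤ) - 2 * a - 1 - k) 0)
        = max (((a + b : ℕ) : ℤ) - 2 * a - 1 - k) 0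
          + if k = ⟨b - a - 1, by omega⟩ then 1 else 0 := by
    simp only [Fin.ext_iff]
    split_ifs <;> omega
  rw [sum_congr rfl fun k _ => hk k, sum_add_distrib, sum_ite_eq', if_pos (mem_univ _)]

theorem even_sum_abs_eta_sub_rho_sub_sum_delta (hab : a < b) :
    Even (∑ j, |eta a b α j - rho (a + b) j| - ∑ k, delta a b (∑ i, α i) k) := by
  have h_abs : ∑ j, |eta a b α j - rho (a + b) j| ≡ ∑ j, (eta a b α j - rho (a + b) j) [ZMOD 2] :=
    Int.ModEq.sum fun j _ => Int.abs_modEq_two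
  rw [sum_sub_distrib, sum_eta hab.le] at h_abs
  have h_rho := sum_range_two_mul_sub_modEq (((a + b : ℕ) : ℤ) - 1) a
  rw [← sum_rho_sub_sum_max hab.le] at h_rho
  rw [sum_delta hab, Int.even_iff]
  unfold Int.ModEq at *
  split_ifs <;> omega

theorem exists_one_le_abs_eta_sub_rho (hab : a ≤ b) (hodd : ¬(∑ i, α i) % 2 = a % 2) :
    ∃ j : Fin (a + b), (j : ℕ) < 2 * a ∧ 1 ≤ |eta a b α j - rho (a + b) j| := by
  by_contra! h
  have hα (i : Fin (2 * a)) : α i = ((a + b : ℕ) : ℤ) - 1 - i := by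
    have := h ⟨i, by omega⟩ i.isLt
    rw [eta, dif_pos i.isLt, rho, abs_lt] at this
    simp only [Fin.eta] at this
    omega
  have := sum_range_two_mul_sub_modEq (((a + b : ℕ) : ℤ) - 1) a
  rw [← Fin.sum_univ_eq_sum_range (fun i => ((a + b : ℕ) : ℤ) - 1 - i)] at this
  exact hodd (by rwa [sum_congr rfl fun i _ => hα i])

theorem cast_abs_eta_sub_rho (j : Fin (a + b)) :
    ((|eta a b α j - rho (a + b) j| : ℤ) : ℝ)
      = |(if h : (j : ℕ) < 2 * a then ((α ⟨j, h⟩ : ℤ) : ℝ) else 0)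
          - (((a + b : ℕ) : ℝ) - 1 - ((j : ℕ) : ℝ))| := by
  simp [eta, rho, apply_dite]

theorem cast_delta (s : ℤ) (k : Fin (a + b)) :
    ((delta a b s k : ℤ) : ℝ)
      = if s % 2 = a % 2 then max (((a + b : ℕ) : ℝ) - 2 * a - 1 - ((k : ℕ) : ℝ)) 0
        else if (k : ℕ) + a + 1 = b then 1
        else max (((a + b : ℕ) : ℝ) - 2 * a - 1 - ((k : ℕ) : ℝ)) 0 := by
  unfold delta
  split_ifs <;> push_cast <;> rfl

theorem delta_eq_zero (ha : 1 ≤ a) (s : ℤ) {k : Fin (a + b)} (hk : (k : ℕ) + 1 = a + b) :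
    delta a b s k = 0 := by
  unfold delta
  split_ifs <;> omega

section Sorted

variable {σ : Equiv.Perm (Fin (a + b))}

theorem max_le_abs_eta_sub_rho_comp
    (hσ : Antitone ((fun j => |eta a b α j - rho (a + b) j|) ∘ σ)) (k : Fin (a + b)) :
    max (((a + b : ℕ) : ℤ) - 2 * a - 1 - k) 0 ≤ |eta a b α (σ k) - rho (a + b) (σ k)| := by
  rcases le_or_gt (((a + b : ℕ) : ℤ) - 2 * a - 1 - k) 0 with h | h
  · rw [max_eq_right h]
    exact abs_nonneg _
  rw [max_eq_left h.le]
  -- the `k + 1` tail entries at positions `2a, …, 2a + k` are all at least `n - 2a - 1 - k`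
  refine hσ.le_comp_of_lt_card (s := Icc ⟨2 * a, by omega⟩ ⟨2 * a + k, by omega⟩)
    (fun j hj => ?_) (by simp; omega)
  simp only [mem_Icc, Fin.le_def] at hj
  rw [abs_eta_sub_rho_of_le hj.1]
  omega

theorem one_le_abs_eta_sub_rho_comp (hab : a < b)
    (hσ : Antitone ((fun j => |eta a b α j - rho (a + b) j|) ∘ σ))
    (hodd : ¬(∑ i, α i) % 2 = a % 2) {k : Fin (a + b)} (hk : (k : ℕ) + a + 1 = b) :
    1 ≤ |eta a b α (σ k) - rho (a + b) (σ k)| := by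
  obtain ⟨j₀, hj₀, h_one⟩ := exists_one_le_abs_eta_sub_rho hab.le hodd
  -- `j₀` together with the `b - a - 1` tail entries at positions `2a, …, n - 2`
  refine hσ.le_comp_of_lt_card (s := insert j₀ (Icc ⟨2 * a, by omega⟩ ⟨a + b - 2, by omega⟩))
    (fun j hj => ?_) ?_
  · rcases mem_insert.1 hj with rfl | hj
    · exact h_one
    simp only [mem_Icc, Fin.le_def] at hj
    rw [abs_eta_sub_rho_of_le hj.1]
    omega
  · rw [card_insert_of_notMem (by simp [Fin.le_def]; omega), Fin.card_Icc]
    simp only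
    omega

theorem delta_le_abs_eta_sub_rho_comp (hab : a < b)
    (hσ : Antitone ((fun j => |eta a b α j - rho (a + b) j|) ∘ σ)) (k : Fin (a + b)) :
    delta a b (∑ i, α i) k ≤ |eta a b α (σ k) - rho (a + b) (σ k)| := by
  unfold delta
  split_ifs with h_even h_k
  · exact max_le_abs_eta_sub_rho_comp hσ k
  · exact one_le_abs_eta_sub_rho_comp hab hσ h_even h_k
  · exact max_le_abs_eta_sub_rho_comp hσ k

theorem abs_eta_sub_rho_comp_eq_zero (hab : a < b)
    (hσ : Antitone ((fun j => |eta a b α j - rho (a + b) j|) ∘ σ))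
    {k : Fin (a + b)} (hk : (k : ℕ) + 1 = a + b) :
    |eta a b α (σ k) - rho (a + b) (σ k)| = 0 := by
  let j : Fin (a + b) := ⟨a + b - 1, by omega⟩
  have h_le := hσ (show σ.symm j ≤ k from Fin.le_def.2 (by omega))
  simp only [Function.comp_apply, Equiv.apply_symm_apply,
    abs_eta_sub_rho_of_le (show 2 * a ≤ (j : ℕ) by simp [j]; omega)] at h_le
  exact le_antisymm (by simp only [j] at h_le; omega) (abs_nonneg _)

end Sorted

end TypeDPositivity

open TypeDPositivity

theorem stmt11_general (a b : ℕ) (ha : 1 ≤ a) (hab : a < b) (α : Fin (2 * a) → ℤ)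
    (w : Fin (a + b) → ℝ)
    (hw : ∀ i j : Fin (a + b), i ≤ j → w j ≤ w i)
    (hwperm : ∃ σ : Equiv.Perm (Fin (a + b)), ∀ i,
      w i = |(if h : ((σ i : ℕ)) < 2 * a then ((α ⟨(σ i : ℕ), h⟩ : ℤ) : ℝ) else 0)
              - (((a + b : ℕ) : ℝ) - 1 - ((σ i : ℕ) : ℝ))|) :
    ∃ c : Fin (a + b) → ℕ,
      w - (fun k : Fin (a + b) =>
          if (∑ i : Fin (2 * a), α i) % 2 = (a : ℤ) % 2 then
            max (((a + b : ℕ) : ℝ) - 2 * a - 1 - ((k : ℕ) : ℝ)) 0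
          else if (k : ℕ) + a + 1 = b then 1
          else max (((a + b : ℕ) : ℝ) - 2 * a - 1 - ((k : ℕ) : ℝ)) 0)
        = ∑ i : Fin (a + b), (c i : ℝ) • simpleRootD (a + b) i := by
  obtain ⟨σ, hσ⟩ := hwperm
  set W : Fin (a + b) → ℤ := fun i => |eta a b α (σ i) - rho (a + b) (σ i)|
  set D : Fin (a + b) → ℤ := delta a b (∑ i, α i)
  have hw_eq (i : Fin (a + b)) : w i = W i := by rw [hσ i, cast_abs_eta_sub_rho]
  have hW : Antitone W := fun i j hij => by exact_mod_cast (hw_eq i ▸ hw_eq j ▸ hw i j hij)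
  lift (fun k => W k - D k) to Fin (a + b) → ℕ
    using fun k => sub_nonneg.2 (delta_le_abs_eta_sub_rho_comp hab hW k) with v hv
  have hv_eq (k : Fin (a + b)) : (v k : ℤ) = W k - D k := congrFun hv k
  have h_last (k : Fin (a + b)) (hk : (k : ℕ) + 1 = a + b) : v k = 0 := by
    have hW_k : W k = 0 := abs_eta_sub_rho_comp_eq_zero hab hW hk
    have hD_k : D k = 0 := delta_eq_zero ha _ hk
    have := hv_eq k
    omega
  have h_even : Even (∑ k, v k) := by
    rw [← Int.even_coe_nat]
    push_cast
    simp only [hv_eq, sum_sub_distrib, W,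
      Equiv.sum_comp σ (fun j => |eta a b α j - rho (a + b) j|)]
    exact even_sum_abs_eta_sub_rho_sub_sum_delta hab
  obtain ⟨c, hc⟩ := exists_nat_smul_simpleRootD_eq v h_last h_even
  refine ⟨c, funext fun k => ?_⟩
  rw [← hc, Pi.sub_apply, hw_eq, ← cast_delta]
  show _ = ((v k : ℤ) : ℝ)
  rw [hv_eq, Int.cast_sub]

/-- Type D positivity (claim (7.2) of Proposition 7.1): with `n = a + b` (`a < b`),
`ρ = (n-1, …, 1, 0)`, `η(α) = (α_1, …, α_{2a}, 0, …, 0)`, and `δ(α)` the weakly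
decreasing vector with coordinate multiset `{n-2a-1, …, 1, 0} ∪ {0^{2a}}` if
`Σ α_i ≡ a (mod 2)` and `{n-2a-1, …, 1, 0} ∪ {1} ∪ {0^{2a-1}}` otherwise, the difference
`{η(α) - ρ} - δ(α)` is a nonnegative integer combination of the simple roots
`e_i - e_{i+1}` (`1 ≤ i ≤ n-1`) and `e_{n-1} + e_n`. -/
theorem stmt11 (a b : ℕ) (ha : 1 ≤ a) (hab : a < b) (α : Fin (2 * a) → ℤ)
    (hα : ∀ i j : Fin (2 * a), i ≤ j → α j ≤ α i) (hα0 : ∀ i, 0 ≤ α i)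
    (w : Fin (a + b) → ℝ)
    (hw : ∀ i j : Fin (a + b), i ≤ j → w j ≤ w i)
    (hwperm : ∃ σ : Equiv.Perm (Fin (a + b)), ∀ i,
      w i = |(if h : ((σ i : ℕ)) < 2 * a then ((α ⟨(σ i : ℕ), h⟩ : ℤ) : ℝ) else 0)
              - (((a + b : ℕ) : ℝ) - 1 - ((σ i : ℕ) : ℝ))|) :
    ∃ c : Fin (a + b) → ℕ,
      w - (fun k : Fin (a + b) =>
          if (∑ i : Fin (2 * a), α i) % 2 = (a : ℤ) % 2 then
            max (((a + b : ℕ) : ℝ) - 2 * a - 1 - ((k : ℕ) : ℝ)) 0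
          else if (k : ℕ) + a + 1 = b then 1
          else max (((a + b : ℕ) : ℝ) - 2 * a - 1 - ((k : ℕ) : ℝ)) 0)
        = ∑ i : Fin (a + b), (c i : ℝ) • simpleRootD (a + b) i :=
  stmt11_general a b ha hab α w hw hwperm
end

section
/- Let x, y ∈ ℝⁿ be weakly decreasing vectors with nonnegative entries such that Σ_{i=1}^{k} y_i ≤ Σ_{i=1}^{k} x_i for every k = 1, …, n, and let ρ ∈ ℝⁿ be strictly decreasing with all entries positive. Then ‖y + ρ‖ ≤ ‖x + ρ‖, with equality if and only if x = y. (Here ‖·‖ is the Euclidean norm.) -/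
open Finset in
/-- Abel-summation positivity: if `c` is strictly decreasing and positive on `[0,n)`
and partial sums of `d` up to each `k ∈ [1,n]` are nonnegative, then
`∑ c i * d i ≥ 0`, with vanishing forcing `d = 0` on `[0,n)`. -/
lemma abel_aux (c d : ℕ → ℝ) (n : ℕ)
    (hc : ∀ i, i + 1 < n → c (i + 1) < c i)
    (hcpos : ∀ i, i < n → 0 < c i)
    (hD : ∀ k, 1 ≤ k → k ≤ n → 0 ≤ ∑ i ∈ range k, d i) :
    0 ≤ ∑ i ∈ range n, c i * d i ∧
      ((∑ i ∈ range n, c i * d i) = 0 → ∀ i, i < n → d i = 0) := by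
  rcases Nat.eq_zero_or_pos n with rfl | hn
  · simp
  have hby := Finset.sum_range_by_parts c d n
  simp only [smul_eq_mul] at hby
  -- rewrite as a sum of nonnegative terms
  have key : ∑ i ∈ range n, c i * d i
      = c (n - 1) * (∑ i ∈ range n, d i)
        + ∑ i ∈ range (n - 1), (c i - c (i + 1)) * (∑ j ∈ range (i + 1), d j) := by
    rw [hby]
    rw [sub_eq_add_neg, ← Finset.sum_neg_distrib]
    congr 1
    apply Finset.sum_congr rfl
    intro i _
    ring
  have hterm : ∀ i ∈ range (n - 1),
      0 ≤ (c i - c (i + 1)) * (∑ j ∈ range (i + 1), d j) := by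
    intro i hi
    rw [Finset.mem_range] at hi
    have h1 : i + 1 < n := by omega
    exact mul_nonneg (by linarith [hc i h1]) (hD (i + 1) (by omega) (by omega))
  have hfirst : 0 ≤ c (n - 1) * (∑ i ∈ range n, d i) :=
    mul_nonneg (hcpos (n - 1) (by omega)).le (hD n hn le_rfl)
  constructor
  · rw [key]
    exact add_nonneg hfirst (Finset.sum_nonneg hterm)
  · intro hzero
    rw [key] at hzero
    have hsum0 : (∑ i ∈ range (n - 1), (c i - c (i + 1)) * (∑ j ∈ range (i + 1), d j)) = 0 := by
      have := Finset.sum_nonneg hterm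
      linarith
    have hfirst0 : c (n - 1) * (∑ i ∈ range n, d i) = 0 := by
      have := Finset.sum_nonneg hterm
      linarith
    -- each partial sum vanishes
    have hDall : ∀ k, 1 ≤ k → k ≤ n → (∑ i ∈ range k, d i) = 0 := by
      intro k hk1 hkn
      rcases eq_or_lt_of_le hkn with rfl | hklt
      · have hc0 : (0:ℝ) < c (k - 1) := hcpos _ (by omega)
        rcases mul_eq_zero.mp hfirst0 with h | h
        · exact absurd h (ne_of_gt hc0)
        · exact h
      · have := (Finset.sum_eq_zero_iff_of_nonneg hterm).mp hsum0 (k - 1)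
          (Finset.mem_range.mpr (by omega))
        have hck : (0:ℝ) < c (k - 1) - c (k - 1 + 1) := by
          have := hc (k - 1) (by omega); linarith
        have hk' : k - 1 + 1 = k := by omega
        rw [hk'] at this hck
        rcases mul_eq_zero.mp this with h | h
        · exact absurd h (ne_of_gt hck)
        · exact h
    intro i hi
    have h1 := hDall (i + 1) (by omega) (by omega)
    have h2 : (∑ j ∈ range i, d j) = 0 := by
      rcases Nat.eq_zero_or_pos i with rfl | hi0
      · simp
      · exact hDall i hi0 (by omega)
    have := Finset.sum_range_succ d i
    rw [h1, h2] at this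
    linarith

/-- Dominance-order norm comparison: if `x, y ∈ ℝⁿ` are weakly decreasing with
nonnegative entries, the partial sums of `y` are bounded by those of `x`
(`Σ_{i=1}^{k} y_i ≤ Σ_{i=1}^{k} x_i` for all `k = 1, …, n`), and `ρ` is strictly
decreasing with positive entries, then `‖y + ρ‖ ≤ ‖x + ρ‖` (Euclidean norm), with
equality if and only if `x = y`. -/
theorem stmt12 (n : ℕ) (x y ρ : Fin n → ℝ)
    (hx : ∀ i j : Fin n, i ≤ j → x j ≤ x i) (hx0 : ∀ i, 0 ≤ x i)
    (hy : ∀ i j : Fin n, i ≤ j → y j ≤ y i) (hy0 : ∀ i, 0 ≤ y i)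
    (hdom : ∀ k : ℕ, 1 ≤ k → k ≤ n →
      (∑ i ∈ Finset.univ.filter (fun i : Fin n => (i : ℕ) < k), y i)
        ≤ ∑ i ∈ Finset.univ.filter (fun i : Fin n => (i : ℕ) < k), x i)
    (hρ : ∀ i j : Fin n, i < j → ρ j < ρ i) (hρ0 : ∀ i, 0 < ρ i) :
    Real.sqrt (∑ i : Fin n, (y i + ρ i) ^ 2) ≤ Real.sqrt (∑ i : Fin n, (x i + ρ i) ^ 2) ∧
    (Real.sqrt (∑ i : Fin n, (y i + ρ i) ^ 2)
        = Real.sqrt (∑ i : Fin n, (x i + ρ i) ^ 2) ↔ x = y) := by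
  classical
  -- extend to ℕ
  set c : ℕ → ℝ := fun i => if h : i < n then x ⟨i, h⟩ + y ⟨i, h⟩ + 2 * ρ ⟨i, h⟩ else 0 with hcdef
  set d : ℕ → ℝ := fun i => if h : i < n then x ⟨i, h⟩ - y ⟨i, h⟩ else 0 with hddef
  have hc : ∀ i, i + 1 < n → c (i + 1) < c i := by
    intro i h
    have hi : i < n := by omega
    simp only [hcdef, dif_pos h, dif_pos hi]
    have h1 := hx ⟨i, hi⟩ ⟨i + 1, h⟩ (by simp [Fin.le_def])
    have h2 := hy ⟨i, hi⟩ ⟨i + 1, h⟩ (by simp [Fin.le_def])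
    have h3 := hρ ⟨i, hi⟩ ⟨i + 1, h⟩ (by simp [Fin.lt_def])
    linarith
  have hcpos : ∀ i, i < n → 0 < c i := by
    intro i h
    simp only [hcdef, dif_pos h]
    have := hx0 ⟨i, h⟩; have := hy0 ⟨i, h⟩; have := hρ0 ⟨i, h⟩
    linarith
  -- partial sums over filtered Fin equal range sums of extensions
  have hfil : ∀ (f : Fin n → ℝ) (k : ℕ), k ≤ n →
      (∑ i ∈ Finset.univ.filter (fun i : Fin n => (i : ℕ) < k), f i)
        = ∑ i ∈ Finset.range k, (fun i => if h : i < n then f ⟨i, h⟩ else 0) i := by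
    intro f k hk
    have h1 : (∑ i ∈ Finset.univ.filter (fun i : Fin n => (i : ℕ) < k), f i)
        = ∑ i : Fin n, (fun j : ℕ => if j < k then (if h : j < n then f ⟨j, h⟩ else 0) else 0) (i : ℕ) := by
      rw [Finset.sum_filter]
      apply Finset.sum_congr rfl
      intro i _
      by_cases h : (i : ℕ) < k
      · simp [h, i.isLt]
      · simp [h]
    rw [h1, Fin.sum_univ_eq_sum_range (fun j : ℕ => if j < k then (if h : j < n then f ⟨j, h⟩ else 0) else 0) n]
    rw [← Finset.sum_filter]
    congr 1
    ext a
    simp only [Finset.mem_filter, Finset.mem_range]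
    omega
  have hD : ∀ k, 1 ≤ k → k ≤ n → 0 ≤ ∑ i ∈ Finset.range k, d i := by
    intro k hk1 hkn
    have h1 := hfil x k hkn
    have h2 := hfil y k hkn
    have h3 := hdom k hk1 hkn
    have : ∑ i ∈ Finset.range k, d i
        = (∑ i ∈ Finset.range k, (fun i => if h : i < n then x ⟨i, h⟩ else 0) i)
          - ∑ i ∈ Finset.range k, (fun i => if h : i < n then y ⟨i, h⟩ else 0) i := by
      rw [← Finset.sum_sub_distrib]
      apply Finset.sum_congr rfl
      intro i hi
      simp only [Finset.mem_range] at hi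
      have hlt : i < n := by omega
      simp [hddef, dif_pos hlt]
    rw [this, ← h1, ← h2]
    linarith
  obtain ⟨habel1, habel2⟩ := abel_aux c d n hc hcpos hD
  -- the difference of the two sums of squares equals ∑ c i * d i
  have hdiff : (∑ i : Fin n, (x i + ρ i) ^ 2) - (∑ i : Fin n, (y i + ρ i) ^ 2)
      = ∑ i ∈ Finset.range n, c i * d i := by
    rw [← Finset.sum_sub_distrib]
    rw [Finset.sum_range fun i => c i * d i]
    apply Finset.sum_congr rfl
    intro i _
    have hlt : (i : ℕ) < n := i.isLt
    simp only [hcdef, hddef, dif_pos hlt, Fin.eta]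
    ring
  have hle : (∑ i : Fin n, (y i + ρ i) ^ 2) ≤ (∑ i : Fin n, (x i + ρ i) ^ 2) := by
    linarith
  have hynn : 0 ≤ ∑ i : Fin n, (y i + ρ i) ^ 2 :=
    Finset.sum_nonneg fun i _ => sq_nonneg _
  have hxnn : 0 ≤ ∑ i : Fin n, (x i + ρ i) ^ 2 :=
    Finset.sum_nonneg fun i _ => sq_nonneg _
  refine ⟨Real.sqrt_le_sqrt hle, ?_⟩
  rw [Real.sqrt_inj hynn hxnn]
  constructor
  · intro heq
    have hsum0 : (∑ i ∈ Finset.range n, c i * d i) = 0 := by linarith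
    have hd0 := habel2 hsum0
    funext i
    have := hd0 i i.isLt
    simp only [hddef, dif_pos i.isLt, Fin.eta] at this
    linarith
  · intro heq
    rw [heq]
end
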